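/- arXiv:1010.5730 — 6 statements merged into one kernel-verified Lean document; each statement's English description precedes it below -/
import Mathlib

section
/- Let n, g, k be positive integers with g ≥ 2 and k = n/g ∈ ℕ, and let f be a trigonometric polynomial. Then (Z_{n,g}^k)^H C_n(f) Z_{n,g}^k = F_k Δ_k F_k^H, where Δ_k = (1/g) · I_{n,g}^T Δ_n(f) I_{n,g} is a diagonal matrix and I_{n,g} ∈ ℝ^{n×k} is the block matrix consisting of g vertically stacked copies of the k×k identity matrix I_k. In particular, (Z_{n,g}^k)^H C_n(f) Z_{n,g}^k is a circulant matrix of size k. -/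
open Matrix Complex
open scoped Matrix ComplexConjugate

noncomputable section

/-- The Fourier matrix of size `n`: `F_n = (1/√n)[e^{-2πijk/n}]_{j,k=0}^{n-1}`. -/
def fourierMatrix (n : ℕ) : Matrix (Fin n) (Fin n) ℂ :=
  Matrix.of fun j k : Fin n =>
    (((Real.sqrt n : ℝ) : ℂ))⁻¹ *
      Complex.exp (-(2 * (Real.pi : ℂ) * Complex.I * ((j : ℕ) : ℂ) * ((k : ℕ) : ℂ)) / (n : ℂ))

/-- The cutting matrix `Z_{n,g}^k`: `[Z]_{i,j} = 1` if `i ≡ g·j (mod n)`, else `0`. -/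
def cuttingMatrix (n g k : ℕ) : Matrix (Fin n) (Fin k) ℂ :=
  Matrix.of fun (i : Fin n) (j : Fin k) =>
    if (((i : ℕ) : ZMod n) = ((g * (j : ℕ) : ℕ) : ZMod n)) then (1 : ℂ) else 0

/-- The matrix `I_{n,g} ∈ ℝ^{n×k}` consisting of `g` vertically stacked copies of `I_k`. -/
def stackedId (n k : ℕ) : Matrix (Fin n) (Fin k) ℂ :=
  Matrix.of fun (i : Fin n) (j : Fin k) => if (i : ℕ) % k = (j : ℕ) then (1 : ℂ) else 0

/-- `f` is a trigonometric polynomial: a finite sum `∑_{|j|≤c} a_j e^{ijx}`. -/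
def IsTrigPoly (f : ℝ → ℂ) : Prop :=
  ∃ (c : ℕ) (a : ℤ → ℂ), ∀ x : ℝ,
    f x = ∑ j ∈ Finset.Icc (-(c : ℤ)) (c : ℤ), a j * Complex.exp (Complex.I * (j : ℂ) * (x : ℂ))

/-- `Δ_n(f) = diag_{j=0,…,n−1} f(2πj/n)`. -/
def diagSamples (n : ℕ) (f : ℝ → ℂ) : Matrix (Fin n) (Fin n) ℂ :=
  Matrix.diagonal fun j : Fin n => f (2 * Real.pi * (j : ℕ) / n)

/-- The circulant matrix generated by `f`: `C_n(f) = F_n Δ_n(f) F_nᴴ`. -/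
def circulantGen (n : ℕ) (f : ℝ → ℂ) : Matrix (Fin n) (Fin n) ℂ :=
  fourierMatrix n * diagSamples n f * (fourierMatrix n)ᴴ

/-- A matrix of size `k` is circulant if its `(r,s)` entry depends only on `(r−s) mod k`. -/
def IsCirculantMat {k : ℕ} (M : Matrix (Fin k) (Fin k) ℂ) : Prop :=
  ∃ w : ZMod k → ℂ, ∀ r s : Fin k, M r s = w (((r : ℕ) : ZMod k) - ((s : ℕ) : ZMod k))

/-! ### Auxiliary lemmas -/

/-- The basic root of unity `ω_n = e^{-2πi/n}`. -/
def om (n : ℕ) : ℂ := Complex.exp (-(2 * (Real.pi:ℂ) * Complex.I) / n)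

lemma om_ne (n : ℕ) : om n ≠ 0 := Complex.exp_ne_zero _

lemma conj_om (n : ℕ) : (starRingEnd ℂ) (om n) = (om n)⁻¹ := by
  rw [om, ← Complex.exp_conj, ← Complex.exp_neg]
  congr 1
  simp [map_div₀, map_ofNat, Complex.conj_I, Complex.conj_ofReal]
  ring

lemma om_pow_self {k : ℕ} (hk : 0 < k) : om k ^ k = 1 := by
  have hk' : (k:ℂ) ≠ 0 := Nat.cast_ne_zero.mpr hk.ne'
  rw [om, ← Complex.exp_nat_mul]
  rw [show (k:ℂ) * (-(2 * (Real.pi:ℂ) * Complex.I) / k) = (-1 : ℤ) * (2 * Real.pi * Complex.I) by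
    rw [mul_div_assoc', mul_comm, mul_div_assoc, div_self hk']; push_cast; ring]
  exact Complex.exp_int_mul_two_pi_mul_I (-1)

lemma om_inv_pow_self {k : ℕ} (hk : 0 < k) : ((om k)⁻¹) ^ k = 1 := by
  rw [inv_pow, om_pow_self hk, inv_one]

lemma om_pow_g {g k : ℕ} (hg : 0 < g) (hk : 0 < k) : om (g*k) ^ g = om k := by
  rw [om, om, ← Complex.exp_nat_mul]
  congr 1
  have hg' : (g:ℂ) ≠ 0 := Nat.cast_ne_zero.mpr hg.ne'
  have hk' : (k:ℂ) ≠ 0 := Nat.cast_ne_zero.mpr hk.ne'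
  push_cast
  field_simp

lemma fourierM_apply (n : ℕ) (j l : Fin n) :
    fourierMatrix n j l = (((Real.sqrt n : ℝ) : ℂ))⁻¹ * om n ^ ((j:ℕ) * (l:ℕ)) := by
  rw [fourierMatrix, Matrix.of_apply, om, ← Complex.exp_nat_mul]
  congr 2
  push_cast
  ring

/-- Entry formula for `F_n D F_nᴴ`. -/
lemma FDF (n : ℕ) (d : Fin n → ℂ) (p q : Fin n) :
    (fourierMatrix n * Matrix.diagonal d * (fourierMatrix n)ᴴ) p q
      = (n:ℂ)⁻¹ * ∑ a : Fin n, d a * om n ^ ((p:ℕ) * (a:ℕ)) * ((om n)⁻¹) ^ ((q:ℕ) * (a:ℕ)) := by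
  rw [Matrix.mul_assoc, Matrix.mul_apply, Finset.mul_sum]
  refine Finset.sum_congr rfl fun a _ => ?_
  rw [Matrix.diagonal_mul, Matrix.conjTranspose_apply, fourierM_apply, fourierM_apply]
  simp only [star_mul', star_pow, star_inv₀, RCLike.star_def, Complex.conj_ofReal, conj_om]
  have hn : (((Real.sqrt n : ℝ) : ℂ))⁻¹ * (((Real.sqrt n : ℝ) : ℂ))⁻¹ = (n:ℂ)⁻¹ := by
    rw [← mul_inv, ← Complex.ofReal_mul, Real.mul_self_sqrt (Nat.cast_nonneg n),
      ← Complex.ofReal_inv]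
    push_cast
    ring
  ring_nf
  rw [← hn]
  ring

/-- If `x^k = 1` then `x^m` depends only on `m` modulo `k` (integer powers). -/
lemma zpow_congr_mod {x : ℂ} (hx : x ≠ 0) {k : ℕ} (h1 : x ^ k = 1) {m m' : ℤ}
    (h : (k:ℤ) ∣ (m - m')) : x ^ m = x ^ m' := by
  obtain ⟨t, ht⟩ := h
  have hm : m = m' + (k:ℤ) * t := by linarith
  rw [hm, zpow_add₀ hx, _root_.zpow_mul, zpow_natCast, h1, _root_.one_zpow, mul_one]

section Main

variable {n g k : ℕ}

/-- The embedding `j ↦ g·j` of `Fin k` into `Fin n`. -/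
def emb (g : ℕ) (hg : 0 < g) (hn : n = g * k) (j : Fin k) : Fin n :=
  ⟨g * (j:ℕ), by rw [hn]; exact (Nat.mul_lt_mul_left hg).mpr j.isLt⟩

lemma cutting_eq (hg : 0 < g) (hk : 0 < k) (hn : n = g * k) :
    cuttingMatrix n g k = Matrix.of fun (i : Fin n) (j : Fin k) =>
      if i = emb g hg hn j then (1:ℂ) else 0 := by
  ext i j
  simp only [cuttingMatrix, Matrix.of_apply]
  congr 1
  rw [eq_iff_iff, ZMod.natCast_eq_natCast_iff', Fin.ext_iff]
  have h1 : (i:ℕ) < n := i.isLt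
  have h2 : g * (j:ℕ) < n := by rw [hn]; exact (Nat.mul_lt_mul_left hg).mpr j.isLt
  rw [Nat.mod_eq_of_lt h1, Nat.mod_eq_of_lt h2]
  exact Iff.rfl

/-- Sandwiching by the cutting matrix picks out the `(gr, gs)` entries. -/
lemma sandwich (hg : 0 < g) (hk : 0 < k) (hn : n = g * k) (M : Matrix (Fin n) (Fin n) ℂ)
    (r s : Fin k) :
    ((cuttingMatrix n g k)ᴴ * M * cuttingMatrix n g k) r s = M (emb g hg hn r) (emb g hg hn s) := by
  rw [cutting_eq hg hk hn]
  simp only [Matrix.mul_apply, Matrix.conjTranspose_apply, Matrix.of_apply]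
  simp [apply_ite, Finset.sum_ite_eq, Finset.mul_sum]

end Main

section Main2

variable {n g k : ℕ}

lemma pow_mul_mod {x : ℂ} {k : ℕ} (hk : 0 < k) (h1 : x ^ k = 1) (r m : ℕ) :
    x ^ (r * (m % k)) = x ^ (r * m) := by
  rw [pow_eq_pow_mod (r * (m % k)) h1, pow_eq_pow_mod (r * m) h1]
  congr 1
  rw [Nat.mul_mod, Nat.mod_mod_of_dvd _ dvd_rfl, ← Nat.mul_mod]

/-- Entry formula for the left-hand side. -/
lemma lhs_entry (hg : 0 < g) (hk : 0 < k) (hn : n = g * k) (f : ℝ → ℂ) (r s : Fin k) :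
    ((cuttingMatrix n g k)ᴴ * circulantGen n f * cuttingMatrix n g k) r s
      = (n:ℂ)⁻¹ * ∑ i : Fin n, f (2 * Real.pi * (i:ℕ) / n)
          * om k ^ ((r:ℕ) * (i:ℕ)) * ((om k)⁻¹) ^ ((s:ℕ) * (i:ℕ)) := by
  have hog : om n ^ g = om k := by rw [hn]; exact om_pow_g hg hk
  rw [circulantGen, diagSamples, sandwich hg hk hn, FDF]
  congr 1
  refine Finset.sum_congr rfl fun i _ => ?_
  have her : ((emb g hg hn r : Fin n) : ℕ) = g * (r:ℕ) := rfl
  have hes : ((emb g hg hn s : Fin n) : ℕ) = g * (s:ℕ) := rfl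
  have h1 : om n ^ (g * ((r:ℕ) * (i:ℕ))) = om k ^ ((r:ℕ) * (i:ℕ)) := by rw [pow_mul, hog]
  have h2 : (om n)⁻¹ ^ (g * ((s:ℕ) * (i:ℕ))) = ((om k)⁻¹) ^ ((s:ℕ) * (i:ℕ)) := by
    rw [pow_mul, inv_pow, hog]
  rw [her, hes, mul_assoc g, mul_assoc g, h1, h2]

/-- The middle matrix is diagonal. -/
lemma middle_diag (f : ℝ → ℂ) :
    ((g : ℂ))⁻¹ • ((stackedId n k)ᵀ * diagSamples n f * stackedId n k) =
      Matrix.diagonal (fun b : Fin k =>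
        (g:ℂ)⁻¹ * ∑ i : Fin n, if (i:ℕ) % k = (b:ℕ) then f (2 * Real.pi * (i:ℕ) / n) else 0) := by
  have hDS : ∀ (x : Fin n) (b : Fin k), (diagSamples n f * stackedId n k) x b
      = f (2 * Real.pi * (x:ℕ) / n) * (if (x:ℕ) % k = (b:ℕ) then (1:ℂ) else 0) := by
    intro x b
    rw [diagSamples, Matrix.diagonal_mul]
    rfl
  ext a b
  rw [Matrix.smul_apply, Matrix.mul_assoc, Matrix.mul_apply]
  simp only [hDS]
  simp only [Matrix.transpose_apply, stackedId, Matrix.of_apply, smul_eq_mul]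
  by_cases hab : a = b
  · subst hab
    rw [Matrix.diagonal_apply_eq]
    congr 1
    refine Finset.sum_congr rfl fun i _ => ?_
    by_cases h : (i:ℕ) % k = (a:ℕ) <;> simp [h]
  · rw [Matrix.diagonal_apply_ne _ hab]
    have hz : ∀ i : Fin n, (if (i:ℕ) % k = (a:ℕ) then (1:ℂ) else 0) *
        (f (2 * Real.pi * (i:ℕ) / n) * if (i:ℕ) % k = (b:ℕ) then (1:ℂ) else 0) = 0 := by
      intro i
      by_cases ha : (i:ℕ) % k = (a:ℕ)
      · have hb : ¬ ((i:ℕ) % k = (b:ℕ)) := fun hb => hab (Fin.ext (ha.symm.trans hb))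
        rw [if_pos ha, if_neg hb, mul_zero, mul_zero]
      · simp [ha]
    rw [Finset.sum_congr rfl fun i _ => hz i, Finset.sum_const_zero, mul_zero]

end Main2

theorem cutting_conj_circulant_cutting (n g k : ℕ) (hg : 2 ≤ g) (hk : 0 < k) (hn : n = g * k)
    (f : ℝ → ℂ) (hf : IsTrigPoly f) :
    (cuttingMatrix n g k)ᴴ * circulantGen n f * cuttingMatrix n g k =
        fourierMatrix k *
          (((g : ℂ))⁻¹ • ((stackedId n k)ᵀ * diagSamples n f * stackedId n k)) *
          (fourierMatrix k)ᴴ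
      ∧ (∃ d : Fin k → ℂ,
          ((g : ℂ))⁻¹ • ((stackedId n k)ᵀ * diagSamples n f * stackedId n k) =
            Matrix.diagonal d)
      ∧ IsCirculantMat ((cuttingMatrix n g k)ᴴ * circulantGen n f * cuttingMatrix n g k) := by
  have hg0 : 0 < g := lt_of_lt_of_le two_pos hg
  have hgc : ((g:ℂ)) ≠ 0 := Nat.cast_ne_zero.mpr hg0.ne'
  have hkc : ((k:ℂ)) ≠ 0 := Nat.cast_ne_zero.mpr hk.ne'
  haveI : NeZero k := ⟨hk.ne'⟩
  have hninv : (n:ℂ)⁻¹ = (k:ℂ)⁻¹ * (g:ℂ)⁻¹ := by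
    rw [hn]; push_cast; rw [mul_inv]; ring
  refine ⟨?_, ⟨_, middle_diag f⟩, ?_⟩
  · ext r s
    rw [lhs_entry hg0 hk hn f r s, middle_diag f, FDF]
    have key : ∀ i : Fin n,
        (∑ b : Fin k, (if (i:ℕ) % k = (b:ℕ) then f (2 * Real.pi * (i:ℕ) / n) else 0) *
          (om k ^ ((r:ℕ) * (b:ℕ)) * ((om k)⁻¹) ^ ((s:ℕ) * (b:ℕ))))
        = f (2 * Real.pi * (i:ℕ) / n) *
            (om k ^ ((r:ℕ) * (i:ℕ)) * ((om k)⁻¹) ^ ((s:ℕ) * (i:ℕ))) := by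
      intro i
      have hbi : (i:ℕ) % k < k := Nat.mod_lt _ hk
      rw [Finset.sum_eq_single (⟨(i:ℕ) % k, hbi⟩ : Fin k)]
      · rw [if_pos rfl]
        show f _ * (om k ^ ((r:ℕ) * ((i:ℕ) % k)) * ((om k)⁻¹) ^ ((s:ℕ) * ((i:ℕ) % k))) = _
        rw [pow_mul_mod hk (om_pow_self hk), pow_mul_mod hk (om_inv_pow_self hk)]
      · intro b _ hb
        rw [if_neg fun h => hb (Fin.ext h.symm), zero_mul]
      · intro h
        exact absurd (Finset.mem_univ _) h
    calc ((n:ℂ))⁻¹ * ∑ i : Fin n, f (2 * Real.pi * (i:ℕ) / n)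
          * om k ^ ((r:ℕ) * (i:ℕ)) * ((om k)⁻¹) ^ ((s:ℕ) * (i:ℕ))
        = (k:ℂ)⁻¹ * ((g:ℂ)⁻¹ * ∑ i : Fin n, f (2 * Real.pi * (i:ℕ) / n)
            * (om k ^ ((r:ℕ) * (i:ℕ)) * ((om k)⁻¹) ^ ((s:ℕ) * (i:ℕ)))) := by
          rw [hninv, mul_assoc]
          congr 2
          exact Finset.sum_congr rfl fun i _ => by ring
      _ = (k:ℂ)⁻¹ * ((g:ℂ)⁻¹ * ∑ i : Fin n, ∑ b : Fin k,
            (if (i:ℕ) % k = (b:ℕ) then f (2 * Real.pi * (i:ℕ) / n) else 0) *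
              (om k ^ ((r:ℕ) * (b:ℕ)) * ((om k)⁻¹) ^ ((s:ℕ) * (b:ℕ)))) := by
          congr 2
          exact Finset.sum_congr rfl fun i _ => (key i).symm
      _ = (k:ℂ)⁻¹ * ∑ b : Fin k,
            ((g:ℂ)⁻¹ * ∑ i : Fin n,
              if (i:ℕ) % k = (b:ℕ) then f (2 * Real.pi * (i:ℕ) / n) else 0)
            * om k ^ ((r:ℕ) * (b:ℕ)) * ((om k)⁻¹) ^ ((s:ℕ) * (b:ℕ)) := by
          rw [Finset.sum_comm]
          congr 1
          rw [Finset.mul_sum]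
          refine Finset.sum_congr rfl fun b _ => ?_
          conv_rhs => rw [mul_assoc, mul_assoc, Finset.sum_mul]
  · refine ⟨fun m => (n:ℂ)⁻¹ * ∑ i : Fin n, f (2 * Real.pi * (i:ℕ) / n)
        * om k ^ ((m.val) * (i:ℕ)), fun r s => ?_⟩
    rw [lhs_entry hg0 hk hn f r s]
    congr 1
    refine Finset.sum_congr rfl fun i _ => ?_
    set v : ℕ := (((r:ℕ) : ZMod k) - ((s:ℕ) : ZMod k)).val with hv
    have hdvd : (k:ℤ) ∣ (((r:ℕ):ℤ) - ((s:ℕ):ℤ)) - (v:ℤ) := by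
      have h0 : (((((r:ℕ):ℤ) - ((s:ℕ):ℤ)) - (v:ℤ) : ℤ) : ZMod k) = 0 := by
        push_cast
        rw [hv, ZMod.natCast_val, ZMod.cast_id]
        ring
      exact (ZMod.intCast_zmod_eq_zero_iff_dvd _ k).mp h0
    have hx := om_ne k
    have h1 := om_pow_self hk
    rw [mul_assoc]
    congr 1
    have hdvd2 : (k:ℤ) ∣ (((((r:ℕ) * (i:ℕ) : ℕ)):ℤ) + -((((s:ℕ) * (i:ℕ) : ℕ)):ℤ))
        - (((v * (i:ℕ) : ℕ)):ℤ) := by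
      obtain ⟨t, ht⟩ := hdvd
      refine ⟨t * (i:ℕ), ?_⟩
      push_cast
      push_cast at ht
      nlinarith [ht]
    rw [inv_pow, ← zpow_natCast (om k) ((s:ℕ) * (i:ℕ)), ← _root_.zpow_neg,
      ← zpow_natCast (om k) ((r:ℕ) * (i:ℕ)), ← zpow_add₀ hx,
      ← zpow_natCast (om k) (v * (i:ℕ))]
    exact zpow_congr_mod hx h1 hdvd2
end
end

section
/- Let f be a nonnegative trigonometric polynomial, let g ≥ 2 and k = n/g ∈ ℕ, and let p_{n,g}^k = C_n(p) Z_{n,g}^k ∈ ℂ^{n×k}, where p is a trigonometric polynomial satisfying the TGM condition (i) at every zero of f and the TGM condition (ii) globally. Then (p_{n,g}^k)^H C_n(f) p_{n,g}^k = C_k(f̂), where f̂(x) = (1/g) Σ_{y ∈ Ω_g(x/g)} f(y)|p(y)|², and f̂ is a nonnegative trigonometric polynomial. -/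
open Matrix Complex Filter Topology
open scoped Matrix ComplexConjugate

noncomputable section

/-- A real-valued function is a trigonometric polynomial: a finite sum `∑_{|j|≤c} a_j e^{ijx}`. -/
def IsTrigPolyR (f : ℝ → ℝ) : Prop :=
  ∃ (c : ℕ) (a : ℤ → ℂ), ∀ x : ℝ,
    (f x : ℂ) = ∑ j ∈ Finset.Icc (-(c : ℤ)) (c : ℤ), a j * Complex.exp (Complex.I * (j : ℂ) * (x : ℂ))

/-- The circulant matrix generated by a real-valued `f`:
`C_n(f) = F_n · diag_{j}(f(2πj/n)) · F_nᴴ`. -/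
def circulantGenR (n : ℕ) (f : ℝ → ℝ) : Matrix (Fin n) (Fin n) ℂ :=
  fourierMatrix n *
    Matrix.diagonal (fun j : Fin n => ((f (2 * Real.pi * (j : ℕ) / n) : ℝ) : ℂ)) *
    (fourierMatrix n)ᴴ

/-- TGM condition (i): for every zero `x₀` of `f` (in `[0,2π)`), for each `k = 1,…,g−1`,
`lim_{x→x₀} p(x + 2πk/g)² / f(x)` exists finite. -/
def TGMCondOne (f p : ℝ → ℝ) (g : ℕ) : Prop :=
  ∀ x₀ ∈ Set.Ico (0 : ℝ) (2 * Real.pi), f x₀ = 0 →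
    ∀ j : ℕ, 1 ≤ j → j < g →
      ∃ L : ℝ,
        Filter.Tendsto (fun x : ℝ => (p (x + 2 * Real.pi * (j : ℝ) / (g : ℝ)))^2 / f x)
          (nhdsWithin x₀ {x : ℝ | f x ≠ 0}) (nhds L)

/-- TGM condition (ii): `∑_{y ∈ Ω_g(x)} p(y)² > 0` for all `x ∈ [0,2π)`. -/
def TGMCondTwo (p : ℝ → ℝ) (g : ℕ) : Prop :=
  ∀ x ∈ Set.Ico (0 : ℝ) (2 * Real.pi),
    0 < ∑ j ∈ Finset.range g, (p (x + 2 * Real.pi * (j : ℝ) / (g : ℝ)))^2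

/-- The projected symbol `f̂(x) = (1/g) ∑_{y ∈ Ω_g(x/g)} f(y) |p(y)|²`
(the `g`-corners of `x/g` being the points `(x + 2πj)/g`, `j = 0,…,g−1`). -/
def projSymbol (g : ℕ) (f p : ℝ → ℝ) : ℝ → ℝ := fun x =>
  ((g : ℝ))⁻¹ *
    ∑ j ∈ Finset.range g,
      f ((x + 2 * Real.pi * (j : ℝ)) / (g : ℝ)) * (p ((x + 2 * Real.pi * (j : ℝ)) / (g : ℝ)))^2

/-!
With `F_n` unitary, `C_n(f) = F_n diag(f(2πj/n)) F_nᴴ` is Hermitian for real `f` and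
`C_n(f) C_n(h) = C_n(f h)`, so `(C_n(p) Z)ᴴ C_n(f) C_n(p) Z = Zᴴ C_n(f p²) Z`, and for `n = g k`
this is the `k × k` submatrix of `C_n(f p²)` on the indices `g s`. In the entry
`C_n(h)_{gs,gt} = n⁻¹ ∑_j h(2πj/n) e^{2πi(t-s)j/k}` write `j = m + k l`: the phase does not depend
on `l`, and the sum over `l` becomes the mean of `h` over the `g`-corners `(2πm/k + 2πl)/g`, i.e.
the entry of `C_k(f̂)`. The corner mean sends `e^{ijx}` to `e^{i(j/g)x}` if `g ∣ j` and to `0`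
otherwise, so `f̂` is again a trigonometric polynomial.
-/

open Real

theorem sum_range_exp_eq_ite (N : ℕ) (hN : N ≠ 0) (d : ℤ) :
    ∑ j ∈ Finset.range N, Complex.exp (2 * π * I * d * j / N) =
      if (N : ℤ) ∣ d then (N : ℂ) else 0 := by
  have hζ := Complex.isPrimitiveRoot_exp N hN
  set ζ := Complex.exp (2 * π * I / N)
  have hterm (j : ℕ) : Complex.exp (2 * π * I * d * j / N) = (ζ ^ d) ^ j := by
    rw [← Complex.exp_int_mul, ← Complex.exp_nat_mul]
    ring_nf
  simp only [hterm]
  split_ifs with hd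
  · simp [(hζ.zpow_eq_one_iff_dvd d).mpr hd]
  · have hN1 : (ζ ^ d) ^ N = 1 := by
      rw [← zpow_natCast, ← _root_.zpow_mul, hζ.zpow_eq_one_iff_dvd]
      exact dvd_mul_left _ _
    rw [geom_sum_eq (mt (hζ.zpow_eq_one_iff_dvd d).mp hd), hN1, sub_self, zero_div]

theorem ofReal_sqrt_inv_mul_self (n : ℕ) : ((√n : ℝ) : ℂ)⁻¹ * ((√n : ℝ) : ℂ)⁻¹ = (n : ℂ)⁻¹ := by
  rw [← mul_inv, ← Complex.ofReal_mul, Real.mul_self_sqrt n.cast_nonneg, Complex.ofReal_natCast]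

theorem fourierMatrix_apply_comm (n : ℕ) (a b : Fin n) :
    fourierMatrix n a b = fourierMatrix n b a := by
  simp only [fourierMatrix, of_apply]
  ring_nf

theorem star_fourierMatrix_mul (n : ℕ) (a b c : Fin n) :
    star (fourierMatrix n a b) * fourierMatrix n a c =
      (n : ℂ)⁻¹ * Complex.exp (2 * π * I * (((b : ℕ) : ℂ) - (c : ℕ)) * (a : ℕ) / n) := by
  simp only [fourierMatrix, of_apply, star_mul', star_inv₀, Complex.star_def, Complex.conj_ofReal,
    ← Complex.exp_conj, map_div₀, map_neg, map_mul, Complex.conj_I, Complex.conj_ofReal,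
    map_natCast, map_ofNat]
  rw [mul_mul_mul_comm, ofReal_sqrt_inv_mul_self, ← Complex.exp_add]
  ring_nf

theorem fourierMatrix_conjTranspose_mul_self (n : ℕ) :
    (fourierMatrix n)ᴴ * fourierMatrix n = 1 := by
  obtain rfl | hn := eq_or_ne n 0
  · exact Subsingleton.elim _ _
  ext r s
  simp only [mul_apply, conjTranspose_apply, star_fourierMatrix_mul, ← Finset.mul_sum]
  rw [Fin.sum_univ_eq_sum_range
      (fun j => Complex.exp (2 * π * I * (((r : ℕ) : ℂ) - (s : ℕ)) * j / n)),
    ← Int.cast_natCast (R := ℂ) r, ← Int.cast_natCast (R := ℂ) s, ← Int.cast_sub,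
    sum_range_exp_eq_ite n hn]
  by_cases hrs : r = s
  · subst hrs
    simp [hn]
  · have hdvd : ¬ (n : ℤ) ∣ (r : ℕ) - (s : ℕ) := fun hd =>
      hrs (Fin.ext (by have := Int.eq_zero_of_abs_lt_dvd hd (by rw [abs_lt]; omega); omega))
    simp [hrs, hdvd]

theorem circulantGenR_apply (n : ℕ) (f : ℝ → ℝ) (r s : Fin n) :
    circulantGenR n f r s = ∑ j : Fin n, (n : ℂ)⁻¹ * (f (2 * π * (j : ℕ) / n) : ℂ) *
      Complex.exp (2 * π * I * (((s : ℕ) : ℂ) - (r : ℕ)) * (j : ℕ) / n) := by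
  rw [circulantGenR, mul_apply]
  refine Finset.sum_congr rfl fun j _ => ?_
  rw [mul_diagonal, conjTranspose_apply, fourierMatrix_apply_comm n r, fourierMatrix_apply_comm n s,
    mul_right_comm, mul_comm (fourierMatrix n j r), star_fourierMatrix_mul]
  ring

theorem circulantGenR_conjTranspose (n : ℕ) (f : ℝ → ℝ) :
    (circulantGenR n f)ᴴ = circulantGenR n f := by
  simp only [circulantGenR, conjTranspose_mul, conjTranspose_conjTranspose, diagonal_conjTranspose,
    Matrix.mul_assoc]
  congr 3
  funext j
  simp

theorem circulantGenR_mul (n : ℕ) (f h : ℝ → ℝ) :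
    circulantGenR n f * circulantGenR n h = circulantGenR n (fun x => f x * h x) := by
  simp only [circulantGenR, Matrix.mul_assoc]
  rw [← Matrix.mul_assoc (fourierMatrix n)ᴴ, fourierMatrix_conjTranspose_mul_self, Matrix.one_mul,
    ← Matrix.mul_assoc (diagonal _), diagonal_mul_diagonal]
  simp

def finScale {g : ℕ} (hg : 0 < g) (k : ℕ) (t : Fin k) : Fin (g * k) :=
  ⟨g * t, Nat.mul_lt_mul_of_pos_left t.2 hg⟩

theorem cuttingMatrix_eq_submatrix_one {g : ℕ} (hg : 0 < g) (k : ℕ) :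
    cuttingMatrix (g * k) g k =
      (1 : Matrix (Fin (g * k)) (Fin (g * k)) ℂ).submatrix id (finScale hg k) := by
  ext i t
  have ht : g * (t : ℕ) % (g * k) = g * t := Nat.mod_eq_of_lt (finScale hg k t).2
  simp only [cuttingMatrix, of_apply, submatrix_apply, id, one_apply, Fin.ext_iff, finScale,
    ZMod.natCast_eq_natCast_iff', Nat.mod_eq_of_lt i.2, ht]

theorem conjTranspose_cuttingMatrix_mul_mul {g : ℕ} (hg : 0 < g) (k : ℕ)
    (A : Matrix (Fin (g * k)) (Fin (g * k)) ℂ) :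
    (cuttingMatrix (g * k) g k)ᴴ * A * cuttingMatrix (g * k) g k =
      A.submatrix (finScale hg k) (finScale hg k) := by
  have h := one_submatrix_mul (finScale hg k) (Equiv.refl _) A
  have h' := mul_submatrix_one (Equiv.refl _) (finScale hg k) (A.submatrix (finScale hg k) id)
  simp only [Equiv.coe_refl, Equiv.refl_symm, Function.id_comp] at h h'
  rw [cuttingMatrix_eq_submatrix_one hg, conjTranspose_submatrix, conjTranspose_one, h, h',
    submatrix_submatrix]
  rfl

def cornerMean (𝕜 : Type*) [Field 𝕜] (g : ℕ) : (ℝ → 𝕜) →ₗ[𝕜] (ℝ → 𝕜) :=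
  (g : 𝕜)⁻¹ • ∑ l ∈ Finset.range g, LinearMap.funLeft 𝕜 𝕜 (fun x : ℝ => (x + 2 * π * l) / g)

theorem cornerMean_apply {𝕜 : Type*} [Field 𝕜] (g : ℕ) (h : ℝ → 𝕜) (x : ℝ) :
    cornerMean 𝕜 g h x = (g : 𝕜)⁻¹ * ∑ l ∈ Finset.range g, h ((x + 2 * π * l) / g) := by
  simp [cornerMean, LinearMap.funLeft_apply]

theorem projSymbol_eq_cornerMean (g : ℕ) (f p : ℝ → ℝ) :
    projSymbol g f p = cornerMean ℝ g (fun x => f x * p x ^ 2) := by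
  ext x
  rw [cornerMean_apply]
  rfl

theorem circulantGenR_submatrix_finScale {g : ℕ} (hg : 0 < g) (k : ℕ) (h : ℝ → ℝ) :
    (circulantGenR (g * k) h).submatrix (finScale hg k) (finScale hg k) =
      circulantGenR k (cornerMean ℝ g h) := by
  ext s t
  have hk : k ≠ 0 := (Fin.pos s).ne'
  have hg' : g ≠ 0 := hg.ne'
  rw [submatrix_apply, circulantGenR_apply, circulantGenR_apply, ← finProdFinEquiv.sum_comp,
    Fintype.sum_prod_type, Finset.sum_comm]
  refine Finset.sum_congr rfl fun m _ => ?_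
  rw [cornerMean_apply, ← Fin.sum_univ_eq_sum_range, Complex.ofReal_mul, Complex.ofReal_sum,
    Finset.mul_sum, Finset.mul_sum, Finset.sum_mul]
  refine Finset.sum_congr rfl fun l _ => ?_
  simp only [finScale, finProdFinEquiv_apply_val]
  have hpoint : 2 * π * ((m + k * l : ℕ) : ℝ) / (g * k : ℕ) = (2 * π * m / k + 2 * π * l) / g := by
    push_cast
    field_simp
  -- the fine frequency `g (t - s)` sees the offset `k l` only through a multiple of `2π`
  have hphase : 2 * π * I * (((g * t : ℕ) : ℂ) - (g * s : ℕ)) * (m + k * l : ℕ) / (g * k : ℕ) =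
      2 * π * I * (((t : ℕ) : ℂ) - (s : ℕ)) * (m : ℕ) / k +
        (((t - s : ℤ) * l : ℤ) : ℂ) * (2 * π * I) := by
    push_cast
    field_simp
  rw [hpoint, hphase, Complex.exp_add, Complex.exp_int_mul_two_pi_mul_I]
  push_cast
  ring

theorem cornerMean_nonneg (g : ℕ) {h : ℝ → ℝ} (hh : ∀ x, 0 ≤ h x) (x : ℝ) :
    0 ≤ cornerMean ℝ g h x := by
  rw [cornerMean_apply]
  exact mul_nonneg (by positivity) (Finset.sum_nonneg fun l _ => hh _)

def trigMonomial (j : ℤ) (x : ℝ) : ℂ := Complex.exp (I * j * x)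

theorem trigMonomial_add (i j : ℤ) : trigMonomial (i + j) = trigMonomial i * trigMonomial j := by
  funext x
  simp only [trigMonomial, Pi.mul_apply, ← Complex.exp_add]
  push_cast
  ring_nf

def trigPolynomials : Submodule ℂ (ℝ → ℂ) := Submodule.span ℂ (Set.range trigMonomial)

theorem isTrigPolyR_iff_mem_trigPolynomials (f : ℝ → ℝ) :
    IsTrigPolyR f ↔ (fun x => (f x : ℂ)) ∈ trigPolynomials := by
  constructor
  · rintro ⟨c, a, ha⟩
    have hsum : (fun x => (f x : ℂ)) = ∑ j ∈ Finset.Icc (-(c : ℤ)) c, a j • trigMonomial j := by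
      funext x
      simp [ha, trigMonomial]
    rw [hsum]
    exact Submodule.sum_mem _ fun j _ => Submodule.smul_mem _ _ (Submodule.subset_span ⟨j, rfl⟩)
  · intro hf
    obtain ⟨a, ha⟩ := Finsupp.mem_span_range_iff_exists_finsupp.mp hf
    set c := a.support.sup Int.natAbs
    have hsupp : a.support ⊆ Finset.Icc (-(c : ℤ)) c := fun j hj => by
      have := Finset.le_sup (f := Int.natAbs) hj
      simp only [Finset.mem_Icc]
      omega
    refine ⟨c, a, fun x => ?_⟩
    rw [← congrFun ha x, Finsupp.sum_of_support_subset a hsupp (fun i a => a • trigMonomial i)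
      fun j _ => zero_smul ℂ _]
    simp [trigMonomial]

theorem mul_mem_trigPolynomials {F G : ℝ → ℂ} (hF : F ∈ trigPolynomials)
    (hG : G ∈ trigPolynomials) :
    F * G ∈ trigPolynomials := by
  have h := Submodule.mul_mem_mul hF hG
  rw [trigPolynomials, Submodule.span_mul_span] at h
  refine Submodule.span_mono ?_ h
  rintro _ ⟨_, ⟨i, rfl⟩, _, ⟨j, rfl⟩, rfl⟩
  exact ⟨i + j, trigMonomial_add i j⟩

theorem cornerMean_trigMonomial {g : ℕ} (hg : g ≠ 0) (j : ℤ) :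
    cornerMean ℂ g (trigMonomial j) = if (g : ℤ) ∣ j then trigMonomial (j / g) else 0 := by
  funext x
  have hsplit (l : ℕ) : trigMonomial j ((x + 2 * π * l) / g) =
      Complex.exp (I * j * x / g) * Complex.exp (2 * π * I * j * l / g) := by
    rw [trigMonomial, ← Complex.exp_add]
    push_cast
    ring_nf
  simp only [cornerMean_apply, hsplit, ← Finset.mul_sum, sum_range_exp_eq_ite g hg j]
  split_ifs with hd
  · obtain ⟨m, rfl⟩ := hd
    rw [Int.mul_ediv_cancel_left m (by exact_mod_cast hg), trigMonomial]
    push_cast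
    field_simp
  · simp

theorem cornerMean_mem_trigPolynomials {g : ℕ} (hg : g ≠ 0) {F : ℝ → ℂ} (hF : F ∈ trigPolynomials) :
    cornerMean ℂ g F ∈ trigPolynomials := by
  have hle : trigPolynomials ≤ trigPolynomials.comap (cornerMean ℂ g) := by
    refine Submodule.span_le.mpr ?_
    rintro _ ⟨j, rfl⟩
    rw [SetLike.mem_coe, Submodule.mem_comap, cornerMean_trigMonomial hg]
    split_ifs
    · exact Submodule.subset_span ⟨_, rfl⟩
    · exact Submodule.zero_mem _
  exact hle hF

theorem IsTrigPolyR.mul {f h : ℝ → ℝ} (hf : IsTrigPolyR f) (hh : IsTrigPolyR h) :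
    IsTrigPolyR (fun x => f x * h x) := by
  rw [isTrigPolyR_iff_mem_trigPolynomials] at *
  simp only [Complex.ofReal_mul]
  exact mul_mem_trigPolynomials hf hh

theorem IsTrigPolyR.cornerMean {g : ℕ} (hg : g ≠ 0) {h : ℝ → ℝ} (hh : IsTrigPolyR h) :
    IsTrigPolyR (cornerMean ℝ g h) := by
  rw [isTrigPolyR_iff_mem_trigPolynomials] at *
  convert cornerMean_mem_trigPolynomials hg hh using 1
  funext x
  simp [cornerMean_apply]

theorem galerkin_projected_circulant_general (n g k : ℕ) (hg : 2 ≤ g) (hn : n = g * k)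
    (f p : ℝ → ℝ) (hf : IsTrigPolyR f) (hf0 : ∀ x, 0 ≤ f x) (hp : IsTrigPolyR p) :
    (circulantGenR n p * cuttingMatrix n g k)ᴴ * circulantGenR n f *
        (circulantGenR n p * cuttingMatrix n g k) = circulantGenR k (projSymbol g f p)
      ∧ (∀ x, 0 ≤ projSymbol g f p x)
      ∧ IsTrigPolyR (projSymbol g f p) := by
  subst hn
  have hg0 : 0 < g := by omega
  have hsymbol : (fun x => p x * f x * p x) = fun x => f x * p x ^ 2 := by
    funext x
    ring
  rw [projSymbol_eq_cornerMean]
  refine ⟨?_, cornerMean_nonneg g fun x => mul_nonneg (hf0 x) (sq_nonneg _),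
    IsTrigPolyR.cornerMean hg0.ne' (by simpa only [sq, mul_assoc] using hf.mul (hp.mul hp))⟩
  calc (circulantGenR (g * k) p * cuttingMatrix (g * k) g k)ᴴ * circulantGenR (g * k) f *
        (circulantGenR (g * k) p * cuttingMatrix (g * k) g k)
      = (cuttingMatrix (g * k) g k)ᴴ *
          (circulantGenR (g * k) p * circulantGenR (g * k) f * circulantGenR (g * k) p) *
          cuttingMatrix (g * k) g k := by
        simp only [conjTranspose_mul, circulantGenR_conjTranspose, Matrix.mul_assoc]
    _ = circulantGenR k (cornerMean ℝ g fun x => f x * p x ^ 2) := by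
        rw [circulantGenR_mul, circulantGenR_mul, hsymbol, conjTranspose_cuttingMatrix_mul_mul hg0,
          circulantGenR_submatrix_finScale]

theorem galerkin_projected_circulant (n g k : ℕ) (hg : 2 ≤ g) (hk : 0 < k) (hn : n = g * k)
    (f p : ℝ → ℝ) (hf : IsTrigPolyR f) (hf0 : ∀ x, 0 ≤ f x) (hp : IsTrigPolyR p)
    (hc1 : TGMCondOne f p g) (hc2 : TGMCondTwo p g) :
    (circulantGenR n p * cuttingMatrix n g k)ᴴ * circulantGenR n f *
        (circulantGenR n p * cuttingMatrix n g k) = circulantGenR k (projSymbol g f p)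
      ∧ (∀ x, 0 ≤ projSymbol g f p x)
      ∧ IsTrigPolyR (projSymbol g f p) :=
  galerkin_projected_circulant_general n g k hg hn f p hf hf0 hp
end
end

section
/- Let A_n := C_n(f) with f a nonnegative trigonometric polynomial not identically zero, and let V_n := I_n − ω A_n with 0 < ω < 2/‖f‖_∞. Let D_n = a₀ I_n be the main diagonal of A_n, where a₀ = (1/2π)∫_0^{2π} f. If α ≤ a₀ ω (2 − ω‖f‖_∞), then for all x ∈ ℂ^n, ‖V_n x‖²_{A_n} ≤ ‖x‖²_{A_n} − α ‖x‖²_{A_n D_n^{-1} A_n}. -/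
open Matrix Complex
open scoped Matrix ComplexConjugate

noncomputable section

/-- The zeroth Fourier coefficient `a₀ = (1/2π)∫_0^{2π} f`. -/
def zerothCoeff (f : ℝ → ℝ) : ℝ := (1 / (2 * Real.pi)) * ∫ x in (0 : ℝ)..(2 * Real.pi), f x

/-- `‖f‖_∞ = sup_{x ∈ [0,2π)} |f x|`. -/
def supNorm (f : ℝ → ℝ) : ℝ := sSup ((fun x => |f x|) '' Set.Ico (0 : ℝ) (2 * Real.pi))

/-- The squared weighted Euclidean (semi-)norm `‖x‖_X² = x^H X x` (its real part). -/
def wnormSq {n : ℕ} (X : Matrix (Fin n) (Fin n) ℂ) (x : Fin n → ℂ) : ℝ :=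
  (dotProduct (star x) (X.mulVec x)).re

/-!
The Fourier matrix `F_n` is unitary, so `C_n(f) = F_n diag(λ) F_nᴴ` with `λ_j = f(2πj/n)`, and the
three matrices `C_n(f)`, `V_nᴴ C_n(f) V_n` and `C_n(f) D_n⁻¹ C_n(f)` are `F_n diag(φ(λ)) F_nᴴ` for
`φ(t) = t`, `t (1 - ω t)²` and `t² / a₀`: conjugating real diagonal matrices by a unitary is a
⋆-algebra homomorphism. Each weighted seminorm is then `∑_j φ(λ_j) |(F_nᴴ x)_j|²`, and the claim
reduces to the scalar inequality `t (1 - ω t)² ≤ t - (α / a₀) t²` for `t = λ_j ≤ ‖f‖_∞`.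
-/

open Real in
theorem geom_sum_exp_two_pi_I_int_div {n : ℕ} (hn : n ≠ 0) (d : ℤ) :
    ∑ l ∈ Finset.range n, Complex.exp (2 * π * Complex.I * d / n) ^ l =
      if (n : ℤ) ∣ d then (n : ℂ) else 0 := by
  set ζ := Complex.exp (2 * π * Complex.I / n)
  have hζ : IsPrimitiveRoot ζ n := Complex.isPrimitiveRoot_exp n hn
  have hexp : Complex.exp (2 * π * Complex.I * d / n) = ζ ^ d := by
    rw [← Complex.exp_int_mul]; ring_nf
  rw [hexp]
  split_ifs with hd
  · simp [(hζ.zpow_eq_one_iff_dvd d).mpr hd]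
  · have hpow : (ζ ^ d) ^ n = 1 := by
      rw [← zpow_natCast, ← _root_.zpow_mul, mul_comm, _root_.zpow_mul, zpow_natCast,
        hζ.pow_eq_one, _root_.one_zpow]
    rw [geom_sum_eq (mt (hζ.zpow_eq_one_iff_dvd d).mp hd), hpow, sub_self, zero_div]

open Real in
theorem star_fourierMatrix_mul_fourierMatrix (n : ℕ) (j k l : Fin n) :
    star (fourierMatrix n l j) * fourierMatrix n l k =
      (n : ℂ)⁻¹ * Complex.exp (2 * π * Complex.I * ((j : ℤ) - k : ℤ) / n) ^ (l : ℕ) := by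
  have hsqrt : (((√n : ℝ) : ℂ))⁻¹ * (((√n : ℝ) : ℂ))⁻¹ = (n : ℂ)⁻¹ := by
    rw [← mul_inv, ← Complex.ofReal_mul, Real.mul_self_sqrt n.cast_nonneg, Complex.ofReal_natCast]
  simp only [fourierMatrix, of_apply, star_mul', star_inv₀, Complex.star_def, Complex.conj_ofReal,
    ← Complex.exp_conj]
  rw [mul_mul_mul_comm, hsqrt, ← Complex.exp_add, ← Complex.exp_nat_mul]
  congr 2
  simp only [map_div₀, map_neg, map_mul, Complex.conj_I, Complex.conj_natCast, map_ofNat,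
    Complex.conj_ofReal]
  push_cast
  ring

theorem fourierMatrix_mem_unitaryGroup (n : ℕ) : fourierMatrix n ∈ unitaryGroup (Fin n) ℂ := by
  rw [mem_unitaryGroup_iff', star_eq_conjTranspose]
  rcases Nat.eq_zero_or_pos n with rfl | hn
  · exact Subsingleton.elim _ _
  ext j k
  simp only [mul_apply, conjTranspose_apply, star_fourierMatrix_mul_fourierMatrix, ← Finset.mul_sum]
  rw [Fin.sum_univ_eq_sum_range (fun l => Complex.exp _ ^ l), geom_sum_exp_two_pi_I_int_div hn.ne',
    one_apply]
  have hdvd : (n : ℤ) ∣ (j : ℤ) - k ↔ j = k := by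
    refine ⟨fun h => ?_, fun h => by simp [h]⟩
    have := Int.eq_zero_of_abs_lt_dvd h (by rw [abs_lt]; omega)
    omega
  by_cases hjk : j = k
  · simp [hjk, hn.ne']
  · simp [hdvd, hjk]

section

variable {ι : Type*} [Fintype ι] [DecidableEq ι]

def realDiagonal : (ι → ℝ) →⋆ₐ[ℝ] Matrix ι ι ℂ where
  toFun d := diagonal fun i => (d i : ℂ)
  map_one' := by simp
  map_mul' d e := by simp
  map_zero' := by simp
  map_add' d e := by simp
  commutes' r := by simp [Matrix.algebraMap_eq_diagonal, Pi.algebraMap_def]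
  map_star' d := by simp [star_eq_conjTranspose, diagonal_conjTranspose]

def unitaryConjDiagonal (U : unitary (Matrix ι ι ℂ)) : (ι → ℝ) →⋆ₐ[ℝ] Matrix ι ι ℂ :=
  (Unitary.conjStarAlgAut ℝ _ U).toStarAlgHom.comp realDiagonal

theorem unitaryConjDiagonal_apply (U : unitary (Matrix ι ι ℂ)) (d : ι → ℝ) :
    unitaryConjDiagonal U d =
      (U : Matrix ι ι ℂ) * diagonal (fun i => (d i : ℂ)) * (U : Matrix ι ι ℂ)ᴴ :=
  rfl

end

section

variable {n : ℕ}

theorem wnormSq_mulVec (X A : Matrix (Fin n) (Fin n) ℂ) (x : Fin n → ℂ) :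
    wnormSq X (A *ᵥ x) = wnormSq (Aᴴ * X * A) x := by
  simp only [wnormSq, star_mulVec, ← dotProduct_mulVec, mulVec_mulVec, Matrix.mul_assoc]

theorem wnormSq_sub_smul (X Y : Matrix (Fin n) (Fin n) ℂ) (α : ℝ) (x : Fin n → ℂ) :
    wnormSq (X - α • Y) x = wnormSq X x - α * wnormSq Y x := by
  simp [wnormSq, sub_mulVec, smul_mulVec, dotProduct_sub, dotProduct_smul]

theorem wnormSq_mul_diagonal_mul_conjTranspose (U : Matrix (Fin n) (Fin n) ℂ) (d : Fin n → ℝ)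
    (x : Fin n → ℂ) :
    wnormSq (U * diagonal (fun i => (d i : ℂ)) * Uᴴ) x =
      ∑ i, d i * Complex.normSq ((Uᴴ *ᵥ x) i) := by
  nth_rw 1 [← conjTranspose_conjTranspose U]
  rw [← wnormSq_mulVec, wnormSq, dotProduct, Complex.re_sum]
  refine Finset.sum_congr rfl fun i _ => ?_
  simp only [Pi.star_apply, RCLike.star_def, mulVec_diagonal, Complex.mul_re, Complex.conj_re,
    Complex.ofReal_re, Complex.ofReal_im, Complex.conj_im, Complex.mul_im, Complex.normSq_apply]
  ring

theorem wnormSq_unitaryConjDiagonal_mono (U : unitary (Matrix (Fin n) (Fin n) ℂ))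
    {d e : Fin n → ℝ} (hde : d ≤ e) (x : Fin n → ℂ) :
    wnormSq (unitaryConjDiagonal U d) x ≤ wnormSq (unitaryConjDiagonal U e) x := by
  simp only [unitaryConjDiagonal_apply, wnormSq_mul_diagonal_mul_conjTranspose]
  gcongr with i
  · exact Complex.normSq_nonneg _
  · exact hde i

end

theorem Matrix.inv_smul_one {ι K : Type*} [Fintype ι] [DecidableEq ι] [Field K] (c : K) :
    (c • (1 : Matrix ι ι K))⁻¹ = c⁻¹ • 1 := by
  rcases eq_or_ne c 0 with rfl | hc
  · simp
  · exact inv_eq_left_inv (by simp [hc])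

theorem smoothing_symbol_le {l M ω c : ℝ} (hlM : l ≤ M) (hc : c ≤ ω * (2 - ω * M)) :
    (1 - ω * l) * l * (1 - ω * l) ≤ l - c * (l * l) := by
  -- `l (1 - ω l)² = l - ω l² (2 - ω l)` and `2 - ω l ≥ 2 - ω M`
  nlinarith [mul_nonneg (mul_self_nonneg (ω * l)) (sub_nonneg.2 hlM),
    mul_le_mul_of_nonneg_right hc (mul_self_nonneg l)]

def gridSample (f : ℝ → ℝ) (n : ℕ) : Fin n → ℝ := fun j => f (2 * Real.pi * (j : ℕ) / n)

def fourierUnitary (n : ℕ) : unitary (Matrix (Fin n) (Fin n) ℂ) :=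
  ⟨fourierMatrix n, fourierMatrix_mem_unitaryGroup n⟩

theorem circulantGenR_eq_unitaryConjDiagonal (n : ℕ) (f : ℝ → ℝ) :
    circulantGenR n f = unitaryConjDiagonal (fourierUnitary n) (gridSample f n) :=
  rfl

theorem zerothCoeff_nonneg {f : ℝ → ℝ} (hf : ∀ x, 0 ≤ f x) : 0 ≤ zerothCoeff f :=
  mul_nonneg (by positivity) (intervalIntegral.integral_nonneg (by positivity) fun x _ => hf x)

theorem bddAbove_of_supNorm_pos {f : ℝ → ℝ} (h : 0 < supNorm f) :
    BddAbove ((fun x => |f x|) '' Set.Ico 0 (2 * Real.pi)) := by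
  by_contra hb
  rw [supNorm, Real.sSup_of_not_bddAbove hb] at h
  exact h.false

theorem gridSample_le_supNorm {f : ℝ → ℝ} (h : 0 < supNorm f) {n : ℕ} (j : Fin n) :
    gridSample f n j ≤ supNorm f := by
  have hj : 2 * Real.pi * (j : ℕ) / n ∈ Set.Ico 0 (2 * Real.pi) := by
    have hn : (0 : ℝ) < n := by exact_mod_cast j.pos
    refine ⟨by positivity, (div_lt_iff₀ hn).2 ?_⟩
    gcongr
    exact_mod_cast j.isLt
  exact (le_abs_self _).trans (le_csSup (bddAbove_of_supNorm_pos h) ⟨_, hj, rfl⟩)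

theorem richardson_smoothing_property_general (n : ℕ)
    (f : ℝ → ℝ) (hf0 : ∀ x, 0 ≤ f x)
    (ω α : ℝ) (hω0 : 0 < ω) (hω1 : ω < 2 / supNorm f)
    (hα : α ≤ zerothCoeff f * ω * (2 - ω * supNorm f)) :
    ∀ x : Fin n → ℂ,
      wnormSq (circulantGenR n f)
          (((1 : Matrix (Fin n) (Fin n) ℂ) - (ω : ℂ) • circulantGenR n f).mulVec x)
        ≤ wnormSq (circulantGenR n f) x
            - α * wnormSq
                (circulantGenR n f *
                  ((zerothCoeff f : ℂ) • (1 : Matrix (Fin n) (Fin n) ℂ))⁻¹ *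
                  circulantGenR n f) x := by
  intro x
  set Ψ := unitaryConjDiagonal (fourierUnitary n)
  set d := gridSample f n
  have hM : 0 < supNorm f := (div_pos_iff_of_pos_left two_pos).1 (hω0.trans hω1)
  have hc : α / zerothCoeff f ≤ ω * (2 - ω * supNorm f) := by
    have := (lt_div_iff₀ hM).1 hω1
    exact div_le_of_le_mul₀ (zerothCoeff_nonneg hf0) (by nlinarith) (by linarith)
  have hV : 1 - (ω : ℂ) • Ψ d = Ψ (1 - ω • d) := by
    rw [map_sub, map_one, map_smul, Complex.coe_smul]
  have hmid : Ψ d * ((zerothCoeff f : ℂ) • 1)⁻¹ * Ψ d = Ψ ((zerothCoeff f)⁻¹ • (d * d)) := by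
    rw [Matrix.inv_smul_one, ← Complex.ofReal_inv, Complex.coe_smul,
      mul_smul_comm, mul_one, smul_mul_assoc, map_smul, map_mul]
  rw [circulantGenR_eq_unitaryConjDiagonal, hV, hmid, wnormSq_mulVec, ← wnormSq_sub_smul,
    ← map_smul, ← map_sub, ← star_eq_conjTranspose, ← map_star, ← map_mul, ← map_mul]
  refine wnormSq_unitaryConjDiagonal_mono _ (fun j => ?_) x
  simpa [div_eq_mul_inv, mul_assoc] using
    smoothing_symbol_le (gridSample_le_supNorm hM j) hc

theorem richardson_smoothing_property (n : ℕ) (hn : 0 < n)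
    (f : ℝ → ℝ) (hf : IsTrigPolyR f) (hf0 : ∀ x, 0 ≤ f x) (hfne : ∃ x, f x ≠ 0)
    (ω α : ℝ) (hω0 : 0 < ω) (hω1 : ω < 2 / supNorm f)
    (hα : α ≤ zerothCoeff f * ω * (2 - ω * supNorm f)) :
    ∀ x : Fin n → ℂ,
      wnormSq (circulantGenR n f)
          (((1 : Matrix (Fin n) (Fin n) ℂ) - (ω : ℂ) • circulantGenR n f).mulVec x)
        ≤ wnormSq (circulantGenR n f) x
            - α * wnormSq
                (circulantGenR n f *
                  ((zerothCoeff f : ℂ) • (1 : Matrix (Fin n) (Fin n) ℂ))⁻¹ *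
                  circulantGenR n f) x :=
  richardson_smoothing_property_general n f hf0 ω α hω0 hω1 hα
end
end

section
/- Let A_n be a Hermitian positive definite matrix of size n with main diagonal D_n (also positive definite), let p_n^k ∈ ℂ^{n×k} (k < n) be a full-rank matrix, and let V_n ∈ ℂ^{n×n}. Suppose there exists α > 0 such that ‖V_n x‖²_{A_n} ≤ ‖x‖²_{A_n} − α ‖x‖²_{A_n D_n^{-1} A_n} for all x ∈ ℂ^n (smoothing property), and there exists γ > 0 such that min_{y ∈ ℂ^k} ‖x − p_n^k y‖²_{D_n} ≤ γ ‖x‖²_{A_n} for all x ∈ ℂ^n (approximation property). Then γ ≥ α, and the two-grid iteration matrix TGM = V_n^{ν} [I_n − p_n^k ((p_n^k)^H A_n p_n^k)^{-1} (p_n^k)^H A_n] with ν = 1 post-smoothing step satisfies ‖TGM‖_{A_n} ≤ √(1 − α/γ). -/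
/-!
Write `T = I - p (pᴴ A p)⁻¹ pᴴ A`; it is the `A`-orthogonal projection onto the `A`-orthogonal
complement of the range of `p`, so `‖T x‖_A ≤ ‖x‖_A`. For `e` in that complement and any `y`,
`‖e‖²_A = ⟨e - p y, D⁻¹ A e⟩_D`, so Cauchy–Schwarz in the `D`-inner product together with the
approximation property gives `‖e‖²_A ≤ γ ‖e‖²_{A D⁻¹ A}`. Fed into the smoothing property this
yields `‖V e‖²_A ≤ (1 - α/γ) ‖e‖²_A`. Since `k < n`, the complement contains some `e ≠ 0`, for which
the smoothing property forces `0 ≤ (γ - α) ‖e‖²_{A D⁻¹ A}`, that is `α ≤ γ`.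
-/

open Matrix
open scoped Matrix ComplexConjugate ComplexOrder

noncomputable section

open RCLike

namespace Matrix

variable {𝕜 : Type*} [RCLike 𝕜] {ι κ : Type*} [Fintype ι] [Fintype κ]

lemma PosSemidef.re_dotProduct_mulVec_sq_le {M : Matrix ι ι 𝕜} (hM : M.PosSemidef)
    (u v : ι → 𝕜) :
    re (star u ⬝ᵥ M *ᵥ v) ^ 2 ≤ re (star u ⬝ᵥ M *ᵥ u) * re (star v ⬝ᵥ M *ᵥ v) := by
  let _ := M.toSeminormedAddCommGroup hM
  let _ := M.toInnerProductSpace hM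
  have hcs := inner_mul_inner_self_le (𝕜 := 𝕜) u v
  have huv : (inner 𝕜 u v : 𝕜) = star u ⬝ᵥ M *ᵥ v := dotProduct_comm _ _
  have huu : (inner 𝕜 u u : 𝕜) = star u ⬝ᵥ M *ᵥ u := dotProduct_comm _ _
  have hvv : (inner 𝕜 v v : 𝕜) = star v ⬝ᵥ M *ᵥ v := dotProduct_comm _ _
  rw [norm_inner_symm v u, huv, huu, hvv, ← sq] at hcs
  exact (sq_le_sq' (neg_le_of_abs_le (abs_re_le_norm _)) (re_le_norm _)).trans hcs

lemma star_mulVec_dotProduct_mulVec_eq_zero {A : Matrix ι ι 𝕜} {p : Matrix ι κ 𝕜}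
    {e : ι → 𝕜} (he : (pᴴ * A) *ᵥ e = 0) (z : κ → 𝕜) :
    star (p *ᵥ z) ⬝ᵥ A *ᵥ e = 0 := by
  rw [star_mulVec, ← dotProduct_mulVec, mulVec_mulVec, he, dotProduct_zero]

lemma dotProduct_mulVec_add_of_mulVec_eq_zero {A : Matrix ι ι 𝕜} (hA : A.IsHermitian)
    {p : Matrix ι κ 𝕜} {e : ι → 𝕜} (he : (pᴴ * A) *ᵥ e = 0) (z : κ → 𝕜) :
    star (e + p *ᵥ z) ⬝ᵥ A *ᵥ (e + p *ᵥ z) =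
      star e ⬝ᵥ A *ᵥ e + star (p *ᵥ z) ⬝ᵥ A *ᵥ (p *ᵥ z) := by
  have hcross : star e ⬝ᵥ A *ᵥ (p *ᵥ z) = 0 := by
    rw [← star_star (star e ⬝ᵥ _), star_dotProduct, star_star, star_mulVec, ← dotProduct_mulVec,
      hA.eq, star_mulVec_dotProduct_mulVec_eq_zero he, star_zero]
  rw [star_add, mulVec_add, dotProduct_add, add_dotProduct, add_dotProduct, hcross,
    star_mulVec_dotProduct_mulVec_eq_zero he, add_zero, zero_add]

lemma exists_ne_zero_mulVec_eq_zero_of_card_lt {K : Type*} [Field K] (M : Matrix κ ι K)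
    (h : Fintype.card κ < Fintype.card ι) : ∃ v ≠ 0, M *ᵥ v = 0 := by
  have hker : LinearMap.ker M.mulVecLin ≠ ⊥ :=
    LinearMap.ker_ne_bot_of_finrank_lt (by simpa only [Module.finrank_fintype_fun_eq_card])
  obtain ⟨v, hv, hv0⟩ := (Submodule.ne_bot_iff _).mp hker
  exact ⟨v, hv0, hv⟩

lemma dotProduct_mul_mul_mulVec {A : Matrix ι ι 𝕜} (hA : A.IsHermitian) (M : Matrix ι ι 𝕜)
    (e : ι → 𝕜) : star e ⬝ᵥ (A * M * A) *ᵥ e = star (A *ᵥ e) ⬝ᵥ M *ᵥ (A *ᵥ e) := by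
  rw [star_mulVec, ← dotProduct_mulVec, hA.eq, mulVec_mulVec, mulVec_mulVec, Matrix.mul_assoc]

variable [DecidableEq ι]

lemma PosDef.re_dotProduct_mul_inv_mul_pos {A D : Matrix ι ι 𝕜} (hA : A.PosDef) (hD : D.PosDef)
    {e : ι → 𝕜} (he : e ≠ 0) : 0 < re (star e ⬝ᵥ (A * D⁻¹ * A) *ᵥ e) := by
  have hAe : A *ᵥ e ≠ 0 := fun h =>
    he <| (mulVec_injective_iff_isUnit.mpr hA.isUnit) (h.trans (mulVec_zero A).symm)
  rw [dotProduct_mul_mul_mulVec hA.isHermitian]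
  exact hD.inv.re_dotProduct_pos hAe

lemma re_dotProduct_le_of_approx {A D : Matrix ι ι 𝕜} (hA : A.PosDef) (hD : D.PosDef)
    {p : Matrix ι κ 𝕜} {e : ι → 𝕜} {γ : ℝ} (he : (pᴴ * A) *ᵥ e = 0)
    (happrox : ∃ y, re (star (e - p *ᵥ y) ⬝ᵥ D *ᵥ (e - p *ᵥ y)) ≤ γ * re (star e ⬝ᵥ A *ᵥ e)) :
    re (star e ⬝ᵥ A *ᵥ e) ≤ γ * re (star e ⬝ᵥ (A * D⁻¹ * A) *ᵥ e) := by
  obtain rfl | he0 := eq_or_ne e 0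
  · simp
  obtain ⟨y, hy⟩ := happrox
  set u := e - p *ᵥ y
  set v := D⁻¹ *ᵥ (A *ᵥ e)
  have hDv : D *ᵥ v = A *ᵥ e := by
    rw [mulVec_mulVec, mul_nonsing_inv _ (D.isUnit_iff_isUnit_det.mp hD.isUnit), one_mulVec]
  have huv : star u ⬝ᵥ D *ᵥ v = star e ⬝ᵥ A *ᵥ e := by
    rw [hDv, star_sub, sub_dotProduct, star_mulVec_dotProduct_mulVec_eq_zero he, sub_zero]
  have hvv : star v ⬝ᵥ D *ᵥ v = star e ⬝ᵥ (A * D⁻¹ * A) *ᵥ e := by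
    rw [hDv, star_mulVec, ← dotProduct_mulVec, conjTranspose_nonsing_inv, hD.isHermitian.eq,
      dotProduct_mul_mul_mulVec hA.isHermitian]
  have hcs := hD.posSemidef.re_dotProduct_mulVec_sq_le u v
  rw [huv, hvv] at hcs
  have ha := hA.re_dotProduct_pos he0
  have hq := hA.re_dotProduct_mul_inv_mul_pos hD he0
  nlinarith

variable [DecidableEq κ]

def coarseGridCorrection (A : Matrix ι ι 𝕜) (p : Matrix ι κ 𝕜) : Matrix ι ι 𝕜 :=
  1 - p * (pᴴ * A * p)⁻¹ * pᴴ * A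

variable {A : Matrix ι ι 𝕜} {p : Matrix ι κ 𝕜}

lemma coarseGridCorrection_mulVec_add (x : ι → 𝕜) :
    coarseGridCorrection A p *ᵥ x + p *ᵥ (((pᴴ * A * p)⁻¹ * pᴴ * A) *ᵥ x) = x := by
  simp only [coarseGridCorrection, sub_mulVec, one_mulVec, mulVec_mulVec, Matrix.mul_assoc,
    sub_add_cancel]

lemma conjTranspose_mul_mul_coarseGridCorrection (h : IsUnit (pᴴ * A * p)) :
    pᴴ * A * coarseGridCorrection A p = 0 := by
  simp only [coarseGridCorrection, Matrix.mul_sub, Matrix.mul_one, ← Matrix.mul_assoc]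
  rw [mul_nonsing_inv _ ((isUnit_iff_isUnit_det _).mp h), Matrix.one_mul, sub_self]

lemma conjTranspose_mul_mulVec_coarseGridCorrection_mulVec (h : IsUnit (pᴴ * A * p))
    (x : ι → 𝕜) : (pᴴ * A) *ᵥ (coarseGridCorrection A p *ᵥ x) = 0 := by
  rw [mulVec_mulVec, conjTranspose_mul_mul_coarseGridCorrection h, zero_mulVec]

lemma re_dotProduct_coarseGridCorrection_le (hA : A.PosSemidef) (h : IsUnit (pᴴ * A * p))
    (x : ι → 𝕜) :
    re (star (coarseGridCorrection A p *ᵥ x) ⬝ᵥ A *ᵥ (coarseGridCorrection A p *ᵥ x)) ≤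
      re (star x ⬝ᵥ A *ᵥ x) := by
  conv_rhs => rw [← coarseGridCorrection_mulVec_add (A := A) (p := p) x]
  rw [dotProduct_mulVec_add_of_mulVec_eq_zero hA.isHermitian
    (conjTranspose_mul_mulVec_coarseGridCorrection_mulVec h x), map_add]
  exact le_add_of_nonneg_right (hA.re_dotProduct_nonneg _)

end Matrix

theorem two_grid_convergence_general (n k : ℕ) (hkn : k < n)
    (A : Matrix (Fin n) (Fin n) ℂ) (hA : A.PosDef)
    (hD : (Matrix.diagonal fun i => A i i).PosDef)
    (p : Matrix (Fin n) (Fin k) ℂ) (hp : Function.Injective p.mulVec)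
    (V : Matrix (Fin n) (Fin n) ℂ) (α γ : ℝ) (hα : 0 < α)
    (hsmooth : ∀ x : Fin n → ℂ,
      wnormSq A (V.mulVec x) ≤
        wnormSq A x - α * wnormSq (A * (Matrix.diagonal fun i => A i i)⁻¹ * A) x)
    (happrox : ∀ x : Fin n → ℂ, ∃ y : Fin k → ℂ,
      wnormSq (Matrix.diagonal fun i => A i i) (x - p.mulVec y) ≤ γ * wnormSq A x) :
    α ≤ γ ∧
      ∀ x : Fin n → ℂ,
        wnormSq A
            ((V * ((1 : Matrix (Fin n) (Fin n) ℂ) - p * (pᴴ * A * p)⁻¹ * pᴴ * A)).mulVec x)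
          ≤ (1 - α / γ) * wnormSq A x := by
  set D := diagonal fun i => A i i
  have hQ : IsUnit (pᴴ * A * p) := (hA.conjTranspose_mul_mul_same hp).isUnit
  have hstrong : ∀ e, (pᴴ * A) *ᵥ e = 0 → wnormSq A e ≤ γ * wnormSq (A * D⁻¹ * A) e :=
    fun e he => re_dotProduct_le_of_approx hA hD he (happrox e)
  have hαγ : α ≤ γ := by
    obtain ⟨e, he0, he⟩ := exists_ne_zero_mulVec_eq_zero_of_card_lt (pᴴ * A)
      (by simpa only [Fintype.card_fin] using hkn)
    have hq : 0 < wnormSq (A * D⁻¹ * A) e := hA.re_dotProduct_mul_inv_mul_pos hD he0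
    have hVe : 0 ≤ wnormSq A (V *ᵥ e) := hA.posSemidef.re_dotProduct_nonneg (V *ᵥ e)
    nlinarith [hsmooth e, hstrong e he]
  have hγ : 0 < γ := hα.trans_le hαγ
  refine ⟨hαγ, fun x => ?_⟩
  set e := coarseGridCorrection A p *ᵥ x
  have hcoarse : α / γ * wnormSq A e ≤ α * wnormSq (A * D⁻¹ * A) e :=
    calc α / γ * wnormSq A e ≤ α / γ * (γ * wnormSq (A * D⁻¹ * A) e) :=
          mul_le_mul_of_nonneg_left
            (hstrong e (conjTranspose_mul_mulVec_coarseGridCorrection_mulVec hQ x)) (by positivity)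
      _ = α * wnormSq (A * D⁻¹ * A) e := by field_simp
  calc wnormSq A ((V * coarseGridCorrection A p) *ᵥ x) = wnormSq A (V *ᵥ e) := by
        rw [← mulVec_mulVec]
    _ ≤ wnormSq A e - α * wnormSq (A * D⁻¹ * A) e := hsmooth e
    _ ≤ (1 - α / γ) * wnormSq A e := by linarith
    _ ≤ (1 - α / γ) * wnormSq A x :=
        mul_le_mul_of_nonneg_left (re_dotProduct_coarseGridCorrection_le hA.posSemidef hQ x)
          (sub_nonneg.mpr ((div_le_one hγ).mpr hαγ))

theorem two_grid_convergence (n k : ℕ) (hkn : k < n)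
    (A : Matrix (Fin n) (Fin n) ℂ) (hA : A.PosDef)
    (hD : (Matrix.diagonal fun i => A i i).PosDef)
    (p : Matrix (Fin n) (Fin k) ℂ) (hp : Function.Injective p.mulVec)
    (V : Matrix (Fin n) (Fin n) ℂ) (α γ : ℝ) (hα : 0 < α) (hγ : 0 < γ)
    (hsmooth : ∀ x : Fin n → ℂ,
      wnormSq A (V.mulVec x) ≤
        wnormSq A x - α * wnormSq (A * (Matrix.diagonal fun i => A i i)⁻¹ * A) x)
    (happrox : ∀ x : Fin n → ℂ, ∃ y : Fin k → ℂ,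
      wnormSq (Matrix.diagonal fun i => A i i) (x - p.mulVec y) ≤ γ * wnormSq A x) :
    α ≤ γ ∧
      ∀ x : Fin n → ℂ,
        wnormSq A
            ((V * ((1 : Matrix (Fin n) (Fin n) ℂ) - p * (pᴴ * A * p)⁻¹ * pᴴ * A)).mulVec x)
          ≤ (1 - α / γ) * wnormSq A x :=
  two_grid_convergence_general n k hkn A hA hD p hp V α γ hα hsmooth happrox
end
end

section
/- Let n, g, k be positive integers with g ≥ 2 and k = n/g ∈ ℕ, let p be a real-valued trigonometric polynomial, let p_{n,g}^k = C_n(p) Z_{n,g}^k, and assume p_{n,g}^k has full column rank. Let W_n(p) = I_n − p_{n,g}^k [(p_{n,g}^k)^H p_{n,g}^k]^{-1} (p_{n,g}^k)^H. For μ = 0,…,k−1 let p[μ] ∈ ℝ^g be the vector with entries p(2π(μ + rk)/n), r = 0,…,g−1 (the values of p on the g-corners Ω_g(2πμ/n)). Then there is a permutation matrix Π of size n such that Π^T F_n^H W_n(p) F_n Π is the block diagonal matrix whose μ-th g×g diagonal block is I_g − p[μ] p[μ]^T / ‖p[μ]‖₂², for μ = 0,…,k−1. -/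
open Matrix Complex
open scoped Matrix ComplexConjugate

noncomputable section

/-! Write `C_n(p) = F D Fᴴ` with `D = diag (p (2πj/n))`. The columns of `Z = Z_{n,g}^k` pick the
Fourier modes `g l`, and `ω_n^{g l j} = ω_k^{(j mod k) l}` for `ω_N = e^{2πi/N}`, so `Fᴴ Z = R U`
where `R` is the 0/1 matrix of `j ↦ j mod k` and `U` is a multiple of the `k`-point DFT matrix,
hence invertible. The map `A ↦ A (Aᴴ A)⁻¹ Aᴴ` is unchanged by `A ↦ A U` and conjugated by
`A ↦ F A` for unitary `F`, so `Fᴴ W_n(p) F = I - Q (Qᴴ Q)⁻¹ Qᴴ` with `Q = D R`. Reindexing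
`j ↔ (j mod k, ⌊j/k⌋)` turns `Q` into the block-diagonal matrix whose `μ`-th block is the column
`p[μ]`; then `Qᴴ Q = diag ‖p[μ]‖²`, which is invertible because `P` has full column rank, and the
projector is `p[μ] p[μ]ᵀ / ‖p[μ]‖²` blockwise. -/

open scoped Real

namespace Matrix

section ColProj

variable {l m n α : Type*} [Fintype m] [Fintype n] [DecidableEq n] [CommRing α] [StarRing α]

/-- `⁻¹` is `Matrix.inv`, which is `0` at singular matrices; for `A` of full column rank this is the
orthogonal projector onto the range of `A`. -/
def colProj (A : Matrix m n α) : Matrix m m α :=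
  A * (Aᴴ * A)⁻¹ * Aᴴ

theorem colProj_mul_of_isUnit (A : Matrix m n α) {U : Matrix n n α} (hU : IsUnit U) :
    colProj (A * U) = colProj A := by
  have hdet : IsUnit U.det := (isUnit_iff_isUnit_det U).mp hU
  have hdetH : IsUnit Uᴴ.det := by rw [det_conjTranspose]; exact hdet.star
  have hgram : (A * U)ᴴ * (A * U) = Uᴴ * (Aᴴ * A) * U := by
    simp only [conjTranspose_mul, Matrix.mul_assoc]
  calc colProj (A * U)
      = A * (U * U⁻¹) * (Aᴴ * A)⁻¹ * (Uᴴ⁻¹ * Uᴴ) * Aᴴ := by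
        rw [colProj, hgram, mul_inv_rev, mul_inv_rev, conjTranspose_mul]
        simp only [Matrix.mul_assoc]
    _ = colProj A := by
        rw [mul_nonsing_inv U hdet, nonsing_inv_mul Uᴴ hdetH, Matrix.mul_one, Matrix.mul_one]
        rfl

theorem conjTranspose_mul_one_sub_colProj_mul [Fintype l] [DecidableEq l] [DecidableEq m]
    {F : Matrix l m α} (hF : Fᴴ * F = 1) (A : Matrix m n α) :
    Fᴴ * (1 - colProj (F * A)) * F = 1 - colProj A := by
  have hgram : (F * A)ᴴ * (F * A) = Aᴴ * A := by
    rw [conjTranspose_mul, Matrix.mul_assoc, ← Matrix.mul_assoc Fᴴ, hF, Matrix.one_mul]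
  rw [Matrix.mul_sub, Matrix.sub_mul, Matrix.mul_one, hF, colProj, hgram, conjTranspose_mul]
  simp only [← Matrix.mul_assoc, hF, Matrix.one_mul]
  simp only [Matrix.mul_assoc, hF, Matrix.mul_one, colProj]

theorem colProj_submatrix_equiv [Fintype l] (A : Matrix m n α) (e : l ≃ m) :
    colProj (A.submatrix e id) = (colProj A).submatrix e e := by
  have hgram : (A.submatrix e id)ᴴ * A.submatrix e id = Aᴴ * A := by
    rw [conjTranspose_submatrix, submatrix_mul_equiv _ _ _ e, submatrix_id_id]
  rw [colProj, hgram, colProj, conjTranspose_submatrix,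
    submatrix_mul _ _ _ _ _ Function.bijective_id, submatrix_mul _ _ _ _ _ Function.bijective_id,
    submatrix_id_id]

end ColProj

theorem mulVec_injective_of_mul_isUnit {l m n α : Type*} [Fintype m] [Fintype n]
    [DecidableEq n] [CommRing α] {F : Matrix l m α} {A : Matrix m n α} {U : Matrix n n α}
    (h : Function.Injective (F * (A * U)).mulVec) (hU : IsUnit U) :
    Function.Injective A.mulVec := by
  have hAU : Function.Injective (A * U).mulVec := by
    refine Function.Injective.of_comp (f := F.mulVec) ?_
    simpa only [Function.comp_def, mulVec_mulVec] using h
  refine Function.Injective.of_comp_right (g := U.mulVec) ?_ (mulVec_surjective_iff_isUnit.mpr hU)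
  simpa only [Function.comp_def, mulVec_mulVec] using hAU

end Matrix

section BlockColumn

variable {κ ι : Type*} [Fintype κ] [Fintype ι] [DecidableEq κ]

def blockColumn (d : κ × ι → ℝ) : Matrix (κ × ι) κ ℂ :=
  of fun x μ => if x.1 = μ then (d x : ℂ) else 0

theorem blockColumn_conjTranspose_mul_self (d : κ × ι → ℝ) :
    (blockColumn d)ᴴ * blockColumn d = diagonal fun μ => ((∑ r, d (μ, r) ^ 2 : ℝ) : ℂ) := by
  ext μ ν
  by_cases hμν : μ = ν
  · subst hμν
    simp [blockColumn, mul_apply, Fintype.sum_prod_type, sq]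
  · simp [blockColumn, mul_apply, Fintype.sum_prod_type, hμν, Ne.symm hμν]

theorem colProj_blockColumn {d : κ × ι → ℝ} (hd : ∀ μ, ∑ r, d (μ, r) ^ 2 ≠ 0) :
    colProj (blockColumn d) =
      of fun x y => if x.1 = y.1 then ((d x * d y / ∑ r, d (x.1, r) ^ 2 : ℝ) : ℂ) else 0 := by
  have hinv : ((blockColumn d)ᴴ * blockColumn d)⁻¹ =
      diagonal fun μ => ((∑ r, d (μ, r) ^ 2 : ℝ) : ℂ)⁻¹ := by
    refine inv_eq_left_inv ?_
    rw [blockColumn_conjTranspose_mul_self, diagonal_mul_diagonal, ← diagonal_one]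
    congr 1
    funext μ
    exact inv_mul_cancel₀ (by exact_mod_cast hd μ)
  ext x y
  rw [colProj, hinv]
  by_cases hxy : x.1 = y.1
  · simp [blockColumn, mul_apply, diagonal_apply, hxy, div_eq_mul_inv]
    ring
  · simp [blockColumn, mul_apply, diagonal_apply, hxy, Ne.symm hxy]

theorem one_sub_colProj_blockColumn_apply [DecidableEq ι] {d : κ × ι → ℝ}
    (hd : ∀ μ, ∑ r, d (μ, r) ^ 2 ≠ 0) (x y : κ × ι) :
    (1 - colProj (blockColumn d)) x y =
      if x.1 = y.1 then
        ((((if x.2 = y.2 then 1 else 0) - d x * d y / ∑ r, d (x.1, r) ^ 2 : ℝ)) : ℂ)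
      else 0 := by
  rw [Matrix.sub_apply, colProj_blockColumn hd, of_apply, one_apply]
  by_cases h1 : x.1 = y.1 <;> by_cases h2 : x.2 = y.2 <;> simp [Prod.ext_iff, h1, h2]

theorem sum_sq_ne_zero_of_injective_blockColumn {d : κ × ι → ℝ}
    (hinj : Function.Injective (blockColumn d).mulVec) (μ : κ) : ∑ r, d (μ, r) ^ 2 ≠ 0 := by
  intro hzero
  have hcol : ∀ r, d (μ, r) = 0 := fun r =>
    pow_eq_zero_iff two_ne_zero |>.mp <|
      (Finset.sum_eq_zero_iff_of_nonneg fun r _ => sq_nonneg (d (μ, r))).mp hzero r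
        (Finset.mem_univ r)
  have hsingle : (blockColumn d).mulVec (Pi.single μ 1) = (blockColumn d).mulVec 0 := by
    ext ⟨ν, r⟩
    by_cases hν : ν = μ
    · subst hν
      simp [blockColumn, hcol]
    · simp [blockColumn, hν]
  simpa using congrFun (hinj hsingle) μ

end BlockColumn

theorem IsPrimitiveRoot.sum_pow_mul_inv_pow {K : Type*} [Field K] {ζ : K} {N : ℕ}
    (hζ : IsPrimitiveRoot ζ N) (a b : Fin N) :
    ∑ l : Fin N, ζ ^ ((a : ℕ) * l) * ζ⁻¹ ^ ((b : ℕ) * l) = if a = b then (N : K) else 0 := by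
  set z := ζ ^ (a : ℕ) * ζ⁻¹ ^ (b : ℕ)
  have hterm (l : ℕ) : ζ ^ ((a : ℕ) * l) * ζ⁻¹ ^ ((b : ℕ) * l) = z ^ l := by
    rw [mul_pow, ← pow_mul, ← pow_mul]
  have hz : z = 1 ↔ a = b := by
    show ζ ^ (a : ℕ) * ζ⁻¹ ^ (b : ℕ) = 1 ↔ a = b
    rw [inv_pow, mul_inv_eq_one₀ (pow_ne_zero _ (hζ.ne_zero (Fin.pos a).ne')), Fin.ext_iff]
    exact ⟨fun h => hζ.pow_inj a.isLt b.isLt h, fun h => by rw [h]⟩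
  simp only [hterm, Fin.sum_univ_eq_sum_range (z ^ ·)]
  split_ifs with hab
  · simp [hz.mpr hab]
  · have hzN : z ^ N = 1 := by
      rw [mul_pow, ← pow_mul, ← pow_mul, mul_comm (a : ℕ), mul_comm (b : ℕ), pow_mul, pow_mul,
        hζ.pow_eq_one, hζ.inv.pow_eq_one, one_pow, one_pow, one_mul]
    rw [geom_sum_eq (hz.not.mpr hab), hzN, sub_self, zero_div]

theorem star_exp_two_pi_mul_I_div (N : ℕ) :
    star (exp (2 * π * I / N)) = (exp (2 * π * I / N))⁻¹ := by
  rw [← exp_neg, Complex.star_def, ← exp_conj]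
  congr 1
  simp only [map_div₀, map_mul, conj_I, conj_ofReal, map_natCast, map_ofNat]
  ring

def dftMatrix (N : ℕ) : Matrix (Fin N) (Fin N) ℂ :=
  of fun a b => exp (2 * π * I / N) ^ ((a : ℕ) * b)

theorem dftMatrix_mul_conjTranspose {N : ℕ} (hN : N ≠ 0) :
    dftMatrix N * (dftMatrix N)ᴴ = (N : ℂ) • 1 := by
  ext a b
  simp only [mul_apply, dftMatrix, conjTranspose_apply, of_apply, star_pow,
    star_exp_two_pi_mul_I_div, (Complex.isPrimitiveRoot_exp N hN).sum_pow_mul_inv_pow,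
    Matrix.smul_apply, one_apply, smul_eq_mul, mul_ite, mul_one, mul_zero]

theorem isUnit_dftMatrix {N : ℕ} (hN : N ≠ 0) : IsUnit (dftMatrix N) := by
  refine (isUnit_iff_isUnit_det _).mpr
    (isUnit_det_of_right_inverse (B := (N : ℂ)⁻¹ • (dftMatrix N)ᴴ) ?_)
  rw [Matrix.mul_smul, dftMatrix_mul_conjTranspose hN, smul_smul,
    inv_mul_cancel₀ (Nat.cast_ne_zero.mpr hN), one_smul]

theorem fourierMatrix_eq_smul_conjTranspose_dftMatrix (n : ℕ) :
    fourierMatrix n = ((Real.sqrt n : ℂ))⁻¹ • (dftMatrix n)ᴴ := by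
  ext j l
  simp only [fourierMatrix, dftMatrix, of_apply, conjTranspose_apply, Matrix.smul_apply,
    smul_eq_mul, star_pow, star_exp_two_pi_mul_I_div]
  rw [← exp_neg, ← exp_nat_mul]
  congr 2
  push_cast
  ring

theorem conjTranspose_fourierMatrix (n : ℕ) :
    (fourierMatrix n)ᴴ = ((Real.sqrt n : ℂ))⁻¹ • dftMatrix n := by
  rw [fourierMatrix_eq_smul_conjTranspose_dftMatrix, conjTranspose_smul,
    conjTranspose_conjTranspose, star_inv₀, Complex.star_def, conj_ofReal]

theorem conjTranspose_fourierMatrix_mul_self {n : ℕ} (hn : n ≠ 0) :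
    (fourierMatrix n)ᴴ * fourierMatrix n = 1 := by
  have hsqrt : ((Real.sqrt n : ℂ))⁻¹ * ((Real.sqrt n : ℂ))⁻¹ * n = 1 := by
    rw [← mul_inv, ← ofReal_mul, Real.mul_self_sqrt (Nat.cast_nonneg n), ofReal_natCast,
      inv_mul_cancel₀ (Nat.cast_ne_zero.mpr hn)]
  rw [conjTranspose_fourierMatrix, fourierMatrix_eq_smul_conjTranspose_dftMatrix,
    Matrix.smul_mul, Matrix.mul_smul, dftMatrix_mul_conjTranspose hn, smul_smul, smul_smul,
    hsqrt, one_smul]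

theorem exp_two_pi_mul_I_div_pow {n g k : ℕ} (hn : n = g * k) (hg : g ≠ 0) (hk : k ≠ 0) :
    exp (2 * π * I / n) ^ g = exp (2 * π * I / k) := by
  rw [← exp_nat_mul, hn]
  congr 1
  push_cast
  field_simp

theorem dftMatrix_mul_cuttingMatrix_apply {n g k : ℕ} (hn : n = g * k) (hg : g ≠ 0)
    (hk : k ≠ 0) (j : Fin n) (l : Fin k) :
    (dftMatrix n * cuttingMatrix n g k) j l = exp (2 * π * I / k) ^ ((j % k) * l) := by
  have : NeZero n := ⟨hn ▸ mul_ne_zero hg hk⟩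
  have hZ (i : Fin n) : cuttingMatrix n g k i l = if i = Fin.ofNat n (g * l) then 1 else 0 := by
    simp only [cuttingMatrix, of_apply, ZMod.natCast_eq_natCast_iff', Fin.ext_iff, Fin.val_ofNat,
      Nat.mod_eq_of_lt i.isLt]
  simp only [mul_apply, hZ, mul_ite, mul_one, mul_zero, Finset.sum_ite_eq', Finset.mem_univ,
    if_true, dftMatrix, of_apply, Fin.val_ofNat]
  calc exp (2 * π * I / n) ^ ((j : ℕ) * (g * l % n))
      = exp (2 * π * I / n) ^ ((j : ℕ) * (g * l)) :=
        pow_eq_pow_of_modEq ((Nat.mod_modEq _ _).mul_left _)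
          (Complex.isPrimitiveRoot_exp n (NeZero.ne n)).pow_eq_one
    _ = exp (2 * π * I / k) ^ ((j : ℕ) * l) := by
        rw [mul_left_comm, pow_mul, exp_two_pi_mul_I_div_pow hn hg hk]
    _ = exp (2 * π * I / k) ^ ((j % k) * l) :=
        pow_eq_pow_of_modEq ((Nat.mod_modEq _ _).mul_right _).symm
          (Complex.isPrimitiveRoot_exp k hk).pow_eq_one

def foldEquiv {n g k : ℕ} (hn : n = g * k) : Fin n ≃ Fin k × Fin g :=
  (finCongr hn).trans (finProdFinEquiv.symm.trans (Equiv.prodComm _ _))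

theorem foldEquiv_apply_fst_val {n g k : ℕ} (hn : n = g * k) (j : Fin n) :
    ((foldEquiv hn j).1 : ℕ) = j % k := by
  simp [foldEquiv]

theorem foldEquiv_symm_apply_val {n g k : ℕ} (hn : n = g * k) (x : Fin k × Fin g) :
    (((foldEquiv hn).symm x : Fin n) : ℕ) = x.1 + x.2 * k := by
  simp [foldEquiv, mul_comm]

/-- `cornerValues p n k g (μ, ·)` is the vector `p[μ]` of values of `p` on the `g`-corners
`Ω_g(2πμ/n)`. -/
def cornerValues (p : ℝ → ℝ) (n k g : ℕ) (x : Fin k × Fin g) : ℝ :=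
  p (2 * π * ((x.1 : ℕ) + (x.2 : ℕ) * k) / n)

theorem cornerValues_foldEquiv {n g k : ℕ} (hn : n = g * k) (p : ℝ → ℝ) (j : Fin n) :
    cornerValues p n k g (foldEquiv hn j) = p (2 * π * (j : ℕ) / n) := by
  have hval := foldEquiv_symm_apply_val hn (foldEquiv hn j)
  rw [Equiv.symm_apply_apply] at hval
  rw [cornerValues, hval]
  push_cast
  ring_nf

theorem circulantGenR_mul_cuttingMatrix {n g k : ℕ} (hn : n = g * k) (hg : g ≠ 0) (hk : k ≠ 0)
    (p : ℝ → ℝ) :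
    circulantGenR n p * cuttingMatrix n g k =
      fourierMatrix n * ((blockColumn (cornerValues p n k g)).submatrix (foldEquiv hn) id *
        (((Real.sqrt n : ℂ))⁻¹ • dftMatrix k)) := by
  rw [circulantGenR, Matrix.mul_assoc, Matrix.mul_assoc]
  congr 1
  rw [conjTranspose_fourierMatrix, Matrix.smul_mul]
  ext j l
  rw [diagonal_mul, Matrix.smul_apply, dftMatrix_mul_cuttingMatrix_apply hn hg hk]
  simp only [mul_apply, submatrix_apply, blockColumn, of_apply, id, ite_mul, zero_mul,
    Finset.sum_ite_eq, Finset.mem_univ, if_true, cornerValues_foldEquiv, Matrix.smul_apply,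
    dftMatrix, smul_eq_mul]
  rw [foldEquiv_apply_fst_val]

theorem block_diagonalization_of_projector_general (n g k : ℕ) (hg : 2 ≤ g) (hk : 0 < k)
    (hn : n = g * k) (p : ℝ → ℝ)
    (hrank : Function.Injective (circulantGenR n p * cuttingMatrix n g k).mulVec) :
    ∃ e : Fin n ≃ Fin k × Fin g, ∀ i j : Fin n,
      ((fourierMatrix n)ᴴ *
          ((1 : Matrix (Fin n) (Fin n) ℂ) -
            (circulantGenR n p * cuttingMatrix n g k) *
              ((circulantGenR n p * cuttingMatrix n g k)ᴴ *
                (circulantGenR n p * cuttingMatrix n g k))⁻¹ *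
              (circulantGenR n p * cuttingMatrix n g k)ᴴ) *
          fourierMatrix n) i j =
        if (e i).1 = (e j).1 then
          ((((if (e i).2 = (e j).2 then (1 : ℝ) else 0) -
              p (2 * Real.pi * (((e i).1 : ℕ) + ((e i).2 : ℕ) * k) / n) *
                p (2 * Real.pi * (((e j).1 : ℕ) + ((e j).2 : ℕ) * k) / n) /
                  ∑ r : Fin g, (p (2 * Real.pi * (((e i).1 : ℕ) + (r : ℕ) * k) / n))^2 : ℝ)) : ℂ)
        else 0 := by
  have hg0 : g ≠ 0 := by omega
  have hn0 : n ≠ 0 := hn ▸ mul_ne_zero hg0 hk.ne'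
  have hU : IsUnit (((Real.sqrt n : ℂ))⁻¹ • dftMatrix k) := by
    have hc : ((Real.sqrt n : ℂ))⁻¹ ≠ 0 := by simp [hn0]
    simpa [Units.smul_mk0] using (isUnit_dftMatrix hk.ne').smul (Units.mk0 _ hc)
  have hP := circulantGenR_mul_cuttingMatrix hn hg0 hk.ne' p
  have hcorner : ∀ μ, ∑ r, cornerValues p n k g (μ, r) ^ 2 ≠ 0 := by
    have hQ := mulVec_injective_of_mul_isUnit (hP ▸ hrank) hU
    exact sum_sq_ne_zero_of_injective_blockColumn fun v w h =>
      hQ (funext fun j => congrFun h (foldEquiv hn j))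
  refine ⟨foldEquiv hn, fun i j => ?_⟩
  change ((fourierMatrix n)ᴴ * (1 - colProj (circulantGenR n p * cuttingMatrix n g k)) *
    fourierMatrix n) i j = _
  rw [hP, conjTranspose_mul_one_sub_colProj_mul (conjTranspose_fourierMatrix_mul_self hn0),
    colProj_mul_of_isUnit _ hU, colProj_submatrix_equiv, ← submatrix_one_equiv (foldEquiv hn),
    Matrix.sub_apply, submatrix_apply, submatrix_apply, ← Matrix.sub_apply,
    one_sub_colProj_blockColumn_apply hcorner]
  rfl

theorem block_diagonalization_of_projector (n g k : ℕ) (hg : 2 ≤ g) (hk : 0 < k)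
    (hn : n = g * k) (p : ℝ → ℝ) (hp : IsTrigPolyR p)
    (hrank : Function.Injective (circulantGenR n p * cuttingMatrix n g k).mulVec) :
    ∃ e : Fin n ≃ Fin k × Fin g, ∀ i j : Fin n,
      ((fourierMatrix n)ᴴ *
          ((1 : Matrix (Fin n) (Fin n) ℂ) -
            (circulantGenR n p * cuttingMatrix n g k) *
              ((circulantGenR n p * cuttingMatrix n g k)ᴴ *
                (circulantGenR n p * cuttingMatrix n g k))⁻¹ *
              (circulantGenR n p * cuttingMatrix n g k)ᴴ) *
          fourierMatrix n) i j =
        if (e i).1 = (e j).1 then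
          ((((if (e i).2 = (e j).2 then (1 : ℝ) else 0) -
              p (2 * Real.pi * (((e i).1 : ℕ) + ((e i).2 : ℕ) * k) / n) *
                p (2 * Real.pi * (((e j).1 : ℕ) + ((e j).2 : ℕ) * k) / n) /
                  ∑ r : Fin g, (p (2 * Real.pi * (((e i).1 : ℕ) + (r : ℕ) * k) / n))^2 : ℝ)) : ℂ)
        else 0 :=
  block_diagonalization_of_projector_general n g k hg hk hn p hrank
end
end

section
/- Let f and p be trigonometric polynomials of degrees c and d respectively, with p real-valued, and let n > 2(c + 2d). Set B = c + 2d. Then the matrix G_n(f,p) := T_n(p) T_n(f) T_n(p) − T_n(f p²) satisfies [G_n(f,p)]_{i,j} = 0 unless (i < B and j < B) or (i > n−1−B and j > n−1−B); that is, G_n(f,p) is supported on the leading B×B and trailing B×B principal corner blocks, and consequently T_n(p) T_n(f) T_n(p) agrees with the Toeplitz matrix T_n(f p²) in all remaining entries. -/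
open Matrix Complex
open scoped Matrix

noncomputable section

/-- The Toeplitz matrix `T_n = [a_{r−s}]_{r,s=0}^{n−1}` built from coefficients `a : ℤ → ℂ`. -/
def toeplitz (n : ℕ) (a : ℤ → ℂ) : Matrix (Fin n) (Fin n) ℂ :=
  Matrix.of fun r s : Fin n => a (((r : ℕ) : ℤ) - ((s : ℕ) : ℤ))

theorem toeplitz_galerkin_corner_correction (c d n : ℕ) (hn : 2 * (c + 2 * d) < n)
    (a b : ℤ → ℂ)
    (ha : ∀ j : ℤ, (c : ℤ) < |j| → a j = 0)
    (hb : ∀ j : ℤ, (d : ℤ) < |j| → b j = 0)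
    (f p : ℝ → ℂ)
    (hf : ∀ x : ℝ,
      f x = ∑ j ∈ Finset.Icc (-(c : ℤ)) (c : ℤ), a j * Complex.exp (Complex.I * (j : ℂ) * (x : ℂ)))
    (hp : ∀ x : ℝ,
      p x = ∑ j ∈ Finset.Icc (-(d : ℤ)) (d : ℤ), b j * Complex.exp (Complex.I * (j : ℂ) * (x : ℂ)))
    (hpreal : ∀ x : ℝ, (p x).im = 0)
    (e : ℤ → ℂ)
    (he : ∀ j : ℤ,
      e j = ∑ u ∈ Finset.Icc (-(d : ℤ)) (d : ℤ), ∑ v ∈ Finset.Icc (-(c : ℤ)) (c : ℤ),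
        b u * a v * b (j - u - v)) :
    ∀ i j : Fin n,
      ¬(((i : ℕ) < c + 2 * d ∧ (j : ℕ) < c + 2 * d) ∨
        (n - 1 - (c + 2 * d) < (i : ℕ) ∧ n - 1 - (c + 2 * d) < (j : ℕ))) →
      (toeplitz n b * toeplitz n a * toeplitz n b - toeplitz n e) i j = 0 := by
  intro i j H
  have hi' : (i : ℕ) < n := i.isLt
  have hj' : (j : ℕ) < n := j.isLt
  -- the key vanishing fact for out-of-range indices
  have key : ∀ k l : ℤ, (k < 0 ∨ (n : ℤ) ≤ k ∨ l < 0 ∨ (n : ℤ) ≤ l) →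
      b (((i : ℕ) : ℤ) - k) * (a (k - l) * b (l - ((j : ℕ) : ℤ))) = 0 := by
    intro k l hkl
    by_contra h
    have h1 : b (((i : ℕ) : ℤ) - k) ≠ 0 := fun h0 => h (by simp [h0])
    have h2 : a (k - l) ≠ 0 := fun h0 => h (by simp [h0])
    have h3 : b (l - ((j : ℕ) : ℤ)) ≠ 0 := fun h0 => h (by simp [h0])
    have e1 : |((i : ℕ) : ℤ) - k| ≤ (d : ℤ) := not_lt.mp (fun h' => h1 (hb _ h'))
    have e2 : |k - l| ≤ (c : ℤ) := not_lt.mp (fun h' => h2 (ha _ h'))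
    have e3 : |l - ((j : ℕ) : ℤ)| ≤ (d : ℤ) := not_lt.mp (fun h' => h3 (hb _ h'))
    rw [abs_le] at e1 e2 e3
    omega
  -- the big interval
  set M : Finset ℤ := Finset.Icc (((i : ℕ) : ℤ) - (c + d + n)) (((i : ℕ) : ℤ) + (c + d + n))
    with hMdef
  -- the index set of the matrix sums, as a set of integers
  set T : Finset ℤ := (Finset.range n).map ⟨(Nat.cast : ℕ → ℤ), Nat.cast_injective⟩
    with hTdef
  have hT : ∀ k : ℤ, k ∈ T ↔ 0 ≤ k ∧ k < n := by
    intro k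
    simp only [hTdef, Finset.mem_map, Finset.mem_range, Function.Embedding.coeFn_mk]
    constructor
    · rintro ⟨m, hm, rfl⟩; omega
    · intro hk; exact ⟨k.toNat, by omega, by omega⟩
  have fin_to_T : ∀ F : ℤ → ℂ, (∑ x : Fin n, F ((x : ℕ) : ℤ)) = ∑ k ∈ T, F k := by
    intro F
    rw [hTdef, Finset.sum_map, Fin.sum_univ_eq_sum_range (fun m => F ((m : ℕ) : ℤ)) n]
    rfl
  have hTM : T ⊆ M := by
    intro k hk
    rw [hT] at hk
    rw [hMdef, Finset.mem_Icc]
    omega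
  -- LHS equals the sum over M × M
  have hLHS : (toeplitz n b * toeplitz n a * toeplitz n b) i j
      = ∑ k ∈ M, ∑ l ∈ M, b (((i : ℕ) : ℤ) - k) * (a (k - l) * b (l - ((j : ℕ) : ℤ))) := by
    have step1 : (toeplitz n b * toeplitz n a * toeplitz n b) i j
        = ∑ k ∈ T, ∑ l ∈ T, b (((i : ℕ) : ℤ) - k) * (a (k - l) * b (l - ((j : ℕ) : ℤ))) := by
      rw [Matrix.mul_apply]
      simp only [Matrix.mul_apply, Finset.sum_mul, mul_assoc, toeplitz, Matrix.of_apply]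
      rw [Finset.sum_comm]
      exact (fin_to_T (fun k => ∑ x : Fin n, b (((i : ℕ) : ℤ) - k) *
          (a (k - ((x : ℕ) : ℤ)) * b (((x : ℕ) : ℤ) - ((j : ℕ) : ℤ))))).trans
        (Finset.sum_congr rfl fun k _ => fin_to_T
          (fun l => b (((i : ℕ) : ℤ) - k) * (a (k - l) * b (l - ((j : ℕ) : ℤ)))))
    rw [step1, ← Finset.sum_product', ← Finset.sum_product']
    apply Finset.sum_subset
    · intro x hx
      rw [Finset.mem_product] at hx ⊢
      exact ⟨hTM hx.1, hTM hx.2⟩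
    · intro x hx hx'
      rw [Finset.mem_product] at hx hx'
      apply key
      rcases not_and_or.mp hx' with h | h <;> rw [hT] at h <;> omega
  -- RHS equals the same sum over M × M
  have hRHS : e (((i : ℕ) : ℤ) - ((j : ℕ) : ℤ))
      = ∑ k ∈ M, ∑ l ∈ M, b (((i : ℕ) : ℤ) - k) * (a (k - l) * b (l - ((j : ℕ) : ℤ))) := by
    rw [he]
    have inner : ∀ u ∈ Finset.Icc (-(d : ℤ)) (d : ℤ),
        (∑ v ∈ Finset.Icc (-(c : ℤ)) (c : ℤ),
            b u * a v * b (((i : ℕ) : ℤ) - ((j : ℕ) : ℤ) - u - v))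
          = ∑ l ∈ M, b u * (a (((i : ℕ) : ℤ) - u - l) * b (l - ((j : ℕ) : ℤ))) := by
      intro u hu
      rw [Finset.mem_Icc] at hu
      have bij : (∑ v ∈ Finset.Icc (-(c : ℤ)) (c : ℤ),
            b u * a v * b (((i : ℕ) : ℤ) - ((j : ℕ) : ℤ) - u - v))
          = ∑ l ∈ Finset.Icc (((i : ℕ) : ℤ) - u - c) (((i : ℕ) : ℤ) - u + c),
              b u * (a (((i : ℕ) : ℤ) - u - l) * b (l - ((j : ℕ) : ℤ))) := by
        apply Finset.sum_nbij' (i := fun v => ((i : ℕ) : ℤ) - u - v)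
          (j := fun l => ((i : ℕ) : ℤ) - u - l)
        · intro v hv; rw [Finset.mem_Icc] at hv ⊢; omega
        · intro l hl; rw [Finset.mem_Icc] at hl ⊢; omega
        · intro v _; ring
        · intro l _; ring
        · intro v hv
          have h1 : ((i : ℕ) : ℤ) - u - (((i : ℕ) : ℤ) - u - v) = v := by ring
          have h2 : ((i : ℕ) : ℤ) - ((j : ℕ) : ℤ) - u - v
              = (((i : ℕ) : ℤ) - u - v) - ((j : ℕ) : ℤ) := by ring
          rw [h1, h2, mul_assoc]
      rw [bij]
      apply Finset.sum_subset
      · intro l hl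
        rw [Finset.mem_Icc] at hl
        rw [hMdef, Finset.mem_Icc]
        omega
      · intro l _ hl'
        rw [Finset.mem_Icc] at hl'
        have : a (((i : ℕ) : ℤ) - u - l) = 0 := by
          apply ha
          rw [lt_abs]
          omega
        simp [this]
    rw [Finset.sum_congr rfl inner]
    have bij2 : (∑ u ∈ Finset.Icc (-(d : ℤ)) (d : ℤ),
          ∑ l ∈ M, b u * (a (((i : ℕ) : ℤ) - u - l) * b (l - ((j : ℕ) : ℤ))))
        = ∑ k ∈ Finset.Icc (((i : ℕ) : ℤ) - d) (((i : ℕ) : ℤ) + d),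
            ∑ l ∈ M, b (((i : ℕ) : ℤ) - k) * (a (k - l) * b (l - ((j : ℕ) : ℤ))) := by
      apply Finset.sum_nbij' (i := fun u => ((i : ℕ) : ℤ) - u)
        (j := fun k => ((i : ℕ) : ℤ) - k)
      · intro u hu; rw [Finset.mem_Icc] at hu ⊢; omega
      · intro k hk; rw [Finset.mem_Icc] at hk ⊢; omega
      · intro u _; ring
      · intro k _; ring
      · intro u _
        apply Finset.sum_congr rfl
        intro l _
        have h1 : ((i : ℕ) : ℤ) - (((i : ℕ) : ℤ) - u) = u := by ring
        have h2 : ((i : ℕ) : ℤ) - u - l = (((i : ℕ) : ℤ) - u) - l := by ring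
        rw [h1, h2]
    rw [bij2]
    apply Finset.sum_subset
    · intro k hk
      rw [Finset.mem_Icc] at hk
      rw [hMdef, Finset.mem_Icc]
      omega
    · intro k _ hk'
      rw [Finset.mem_Icc] at hk'
      have : b (((i : ℕ) : ℤ) - k) = 0 := by
        apply hb
        rw [lt_abs]
        omega
      apply Finset.sum_eq_zero
      intro l _
      simp [this]
  rw [Matrix.sub_apply, hLHS]
  have : toeplitz n e i j = e (((i : ℕ) : ℤ) - ((j : ℕ) : ℤ)) := rfl
  rw [this, hRHS, sub_self]
end
end
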